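/- arXiv:2412.21040 — 14 statements merged into one kernel-verified Lean document; each statement's English description precedes it below -/
import Mathlib

section
/- Let α > 0 be a real number and set γ := 2α + 1. Let Ω ⊆ ℝ² be open and let w, z, k : ℝ² → ℝ be twice continuously differentiable on Ω and satisfy on Ω the system ∂_t w + λ₃ ∂_y w = (α/(2γ)) σ² ∂_y k, ∂_t z + λ₁ ∂_y z = (α/(2γ)) σ² ∂_y k, ∂_t k + λ₂ ∂_y k = 0. Then the differentiated Riemann variables ẘ, z̊, k̊ satisfy at every point of Ω: ∂_t ẘ + λ₃ ∂_y ẘ = − ẘ·((1+α)/2 · ẘ + (1−α)/2 · z̊ + (α/(2γ)) σ k̊) + (α/(4γ)) σ k̊ (ẘ + z̊); ∂_t z̊ + λ₁ ∂_y z̊ = − z̊·((1−α)/2 · ẘ + (1+α)/2 · z̊ − (α/(2γ)) σ k̊) − (α/(4γ)) σ k̊ (ẘ + z̊); and ∂_t k̊ + λ₂ ∂_y k̊ = − (1/2) k̊ (ẘ + z̊). -/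
/-!
Differentiating the equation of `w` (resp. `z`, `k`) in `y` and using the symmetry of the second
derivative of a `C²` function gives a transport equation for `∂_y w` (resp. `∂_y z`, `∂_y k`) along
the same characteristic speed, with the `y`-derivative of the source and of the speed as new
source terms. The equations for `ẘ`, `z̊`, `k̊` are then linear combinations, with coefficients
polynomial in the unknowns, of these differentiated equations and of the original ones.
-/

/-- Partial derivative in the first (spatial, `y`) variable of a function on `ℝ × ℝ`. -/
noncomputable def pdy (f : ℝ × ℝ → ℝ) (p : ℝ × ℝ) : ℝ := fderiv ℝ f p (1, 0)

/-- Partial derivative in the second (time, `t`) variable of a function on `ℝ × ℝ`. -/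
noncomputable def pdt (f : ℝ × ℝ → ℝ) (p : ℝ × ℝ) : ℝ := fderiv ℝ f p (0, 1)

open Filter Topology

section SecondDerivative

variable {E F : Type*} [NormedAddCommGroup E] [NormedSpace ℝ E]
  [NormedAddCommGroup F] [NormedSpace ℝ F] {f : E → F} {p : E}

theorem ContDiffAt.differentiableAt_fderiv_apply (hf : ContDiffAt ℝ 2 f p) (u : E) :
    DifferentiableAt ℝ (fun q => fderiv ℝ f q u) p :=
  ((hf.fderiv_right (by norm_num)).differentiableAt one_ne_zero).clm_apply
    (differentiableAt_const u)

theorem ContDiffAt.fderiv_fderiv_apply_comm (hf : ContDiffAt ℝ 2 f p) (u v : E) :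
    fderiv ℝ (fun q => fderiv ℝ f q u) p v = fderiv ℝ (fun q => fderiv ℝ f q v) p u := by
  have hd := (hf.fderiv_right (m := 1) (by norm_num)).differentiableAt one_ne_zero
  simp only [fderiv_clm_apply hd (differentiableAt_const _), fderiv_fun_const, Pi.zero_apply,
    ContinuousLinearMap.comp_zero, zero_add, ContinuousLinearMap.flip_apply]
  exact hf.isSymmSndFDerivAt (by simp) v u

end SecondDerivative

theorem ContDiffAt.transport_fderiv_apply {E : Type*} [NormedAddCommGroup E] [NormedSpace ℝ E]
    {f c S : E → ℝ} {p u v : E} (hf : ContDiffAt ℝ 2 f p) (hc : DifferentiableAt ℝ c p)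
    (h : (fun q => fderiv ℝ f q u + c q * fderiv ℝ f q v) =ᶠ[𝓝 p] S) :
    fderiv ℝ (fun q => fderiv ℝ f q v) p u + c p * fderiv ℝ (fun q => fderiv ℝ f q v) p v
      = fderiv ℝ S p v - fderiv ℝ c p v * fderiv ℝ f p v := by
  have hdf := hf.differentiableAt_fderiv_apply
  have hS := DFunLike.congr_fun (h.fderiv_eq (𝕜 := ℝ)) v
  simp only [fderiv_fun_add (hdf u) (hc.fun_mul (hdf v)), fderiv_fun_mul hc (hdf v),
    add_apply, smul_apply, smul_eq_mul] at hS
  rw [← hS, hf.fderiv_fderiv_apply_comm u v]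
  ring

theorem statement0_general
    (α γ : ℝ)
    (Ω : Set (ℝ × ℝ)) (hΩ : IsOpen Ω)
    (w z k : ℝ × ℝ → ℝ)
    (hw : ContDiffOn ℝ 2 w Ω) (hz : ContDiffOn ℝ 2 z Ω) (hk : ContDiffOn ℝ 2 k Ω)
    (σ lam1 lam2 lam3 W Z K : ℝ × ℝ → ℝ)
    (hσ : σ = fun p => (w p - z p) / 2)
    (hl1 : lam1 = fun p => (1 - α) / 2 * w p + (1 + α) / 2 * z p)
    (hl2 : lam2 = fun p => (w p + z p) / 2)
    (hl3 : lam3 = fun p => (1 + α) / 2 * w p + (1 - α) / 2 * z p)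
    (hW : W = fun p => pdy w p - 1 / (2 * γ) * σ p * pdy k p)
    (hZ : Z = fun p => pdy z p + 1 / (2 * γ) * σ p * pdy k p)
    (hK : K = fun p => pdy k p)
    (heq1 : ∀ p ∈ Ω, pdt w p + lam3 p * pdy w p = α / (2 * γ) * σ p ^ 2 * pdy k p)
    (heq2 : ∀ p ∈ Ω, pdt z p + lam1 p * pdy z p = α / (2 * γ) * σ p ^ 2 * pdy k p)
    (heq3 : ∀ p ∈ Ω, pdt k p + lam2 p * pdy k p = 0) :
    ∀ p ∈ Ω,
      (pdt W p + lam3 p * pdy W p =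
        - W p * ((1 + α) / 2 * W p + (1 - α) / 2 * Z p + α / (2 * γ) * σ p * K p)
          + α / (4 * γ) * σ p * K p * (W p + Z p)) ∧
      (pdt Z p + lam1 p * pdy Z p =
        - Z p * ((1 - α) / 2 * W p + (1 + α) / 2 * Z p - α / (2 * γ) * σ p * K p)
          - α / (4 * γ) * σ p * K p * (W p + Z p)) ∧
      (pdt K p + lam2 p * pdy K p = - (1 / 2) * K p * (W p + Z p)) := by
  intro p hp
  have hΩp : Ω ∈ 𝓝 p := hΩ.mem_nhds hp
  have hw2 := hw.contDiffAt hΩp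
  have hz2 := hz.contDiffAt hΩp
  have hk2 := hk.contDiffAt hΩp
  have dw := hw2.differentiableAt two_ne_zero
  have dz := hz2.differentiableAt two_ne_zero
  have dk := hk2.differentiableAt two_ne_zero
  have dwy := hw2.differentiableAt_fderiv_apply (1, 0)
  have dzy := hz2.differentiableAt_fderiv_apply (1, 0)
  have dky := hk2.differentiableAt_fderiv_apply (1, 0)
  have hw0 := heq1 p hp
  have hz0 := heq2 p hp
  subst hσ hl1 hl2 hl3 hW hZ hK
  unfold pdy pdt at *
  have hw1 := hw2.transport_fderiv_apply (by fun_prop) (eventuallyEq_of_mem hΩp heq1)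
  have hz1 := hz2.transport_fderiv_apply (by fun_prop) (eventuallyEq_of_mem hΩp heq2)
  have hk1 := hk2.transport_fderiv_apply (by fun_prop) (eventuallyEq_of_mem hΩp heq3)
  simp (disch := fun_prop) only [fderiv_fun_add, fderiv_fun_sub, fderiv_fun_mul, fderiv_fun_pow,
    div_eq_mul_inv, fderiv_fun_const, Pi.zero_apply, zero_apply, add_apply, sub_apply, smul_apply,
    smul_eq_mul] at hw0 hz0 hw1 hz1 hk1 ⊢
  -- The transport of `σ = (w - z)/2` along `λ₃` (or `λ₁`) is read off from `hw0` and `hz0`.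
  refine ⟨?_, ?_, ?_⟩
  · linear_combination hw1 - (w p - z p) / (4 * γ) * hk1
      - fderiv ℝ k p (1, 0) / (4 * γ) * hw0 + fderiv ℝ k p (1, 0) / (4 * γ) * hz0
  · linear_combination hz1 + (w p - z p) / (4 * γ) * hk1
      + fderiv ℝ k p (1, 0) / (4 * γ) * hw0 - fderiv ℝ k p (1, 0) / (4 * γ) * hz0
  · linear_combination hk1

theorem statement0
    (α γ : ℝ) (hα : 0 < α) (hγ : γ = 2 * α + 1)
    (Ω : Set (ℝ × ℝ)) (hΩ : IsOpen Ω)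
    (w z k : ℝ × ℝ → ℝ)
    (hw : ContDiffOn ℝ 2 w Ω) (hz : ContDiffOn ℝ 2 z Ω) (hk : ContDiffOn ℝ 2 k Ω)
    (σ lam1 lam2 lam3 W Z K : ℝ × ℝ → ℝ)
    (hσ : σ = fun p => (w p - z p) / 2)
    (hl1 : lam1 = fun p => (1 - α) / 2 * w p + (1 + α) / 2 * z p)
    (hl2 : lam2 = fun p => (w p + z p) / 2)
    (hl3 : lam3 = fun p => (1 + α) / 2 * w p + (1 - α) / 2 * z p)
    (hW : W = fun p => pdy w p - 1 / (2 * γ) * σ p * pdy k p)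
    (hZ : Z = fun p => pdy z p + 1 / (2 * γ) * σ p * pdy k p)
    (hK : K = fun p => pdy k p)
    (heq1 : ∀ p ∈ Ω, pdt w p + lam3 p * pdy w p = α / (2 * γ) * σ p ^ 2 * pdy k p)
    (heq2 : ∀ p ∈ Ω, pdt z p + lam1 p * pdy z p = α / (2 * γ) * σ p ^ 2 * pdy k p)
    (heq3 : ∀ p ∈ Ω, pdt k p + lam2 p * pdy k p = 0) :
    ∀ p ∈ Ω,
      (pdt W p + lam3 p * pdy W p =
        - W p * ((1 + α) / 2 * W p + (1 - α) / 2 * Z p + α / (2 * γ) * σ p * K p)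
          + α / (4 * γ) * σ p * K p * (W p + Z p)) ∧
      (pdt Z p + lam1 p * pdy Z p =
        - Z p * ((1 - α) / 2 * W p + (1 + α) / 2 * Z p - α / (2 * γ) * σ p * K p)
          - α / (4 * γ) * σ p * K p * (W p + Z p)) ∧
      (pdt K p + lam2 p * pdy K p = - (1 / 2) * K p * (W p + Z p)) :=
  statement0_general α γ Ω hΩ w z k hw hz hk σ lam1 lam2 lam3 W Z K hσ hl1 hl2 hl3 hW hZ hK heq1
    heq2 heq3
end

section
/- Let α > 0, γ := 2α + 1, let I ⊆ ℝ be an open interval, and let w, z, k : ℝ² → ℝ be twice continuously differentiable on ℝ × I, satisfy the Riemann system there, and satisfy σ := (w−z)/2 > 0 on ℝ × I. Let η : ℝ² → ℝ be twice continuously differentiable on ℝ × I with ∂_t η(x,t) = λ₃(η(x,t), t) for all (x,t) ∈ ℝ × I. Then with Σ(x,t) := σ(η(x,t),t), W̊(x,t) := ẘ(η(x,t),t), Z̊(x,t) := z̊(η(x,t),t), K̊(x,t) := k̊(η(x,t),t) and η_x := ∂_x η, the following identities hold on ℝ × I: (1) ∂_t Σ = −α Σ Z̊ + (α/(2γ))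 Σ² K̊; (2) ∂_x Σ = (1/2) η_x W̊ − (1/2) η_x Z̊ + (1/(2γ)) η_x Σ K̊; (3) ∂_t (Σ⁻¹) = α Σ⁻¹ Z̊ − (α/(2γ)) K̊; (4) ∂_t ∂_x η = (1+α)/2 · η_x W̊ + (1−α)/2 · η_x Z̊ + (α/(2γ)) η_x Σ K̊; (5) ∂_t (η_x W̊) = (α/(4γ)) Σ K̊ (η_x W̊ + η_x Z̊); (6) η_x ∂_t K̊ = α Σ ∂_x K̊ − (1/2) K̊ η_x W̊ − (1/2) η_x K̊ Z̊; (7) η_x ∂_t Z̊ = 2α Σ ∂_x Z̊ − (1−α)/2 · η_x W̊ Z̊ − (α/(4γ)) Σ K̊ η_x W̊ − (1+α)/2 · η_x Z̊² + (α/(4γ)) η_x Σ K̊ Z̊. -/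
/-!
Write `Y(x, t) = (η(x, t), t)`. By the chain rule `∂ₓ (f ∘ Y) = (∂_y f ∘ Y) · η_x`, and since `η`
moves with speed `λ₃`, `∂ₜ (f ∘ Y) = ((∂ₜ + λ₃ ∂_y) f) ∘ Y`. So each identity is `η_x` (or `1`)
times an identity for the transport derivative `∂ₜ + λ₃ ∂_y` of `σ`, `k̊`, `ẘ` or `z̊` at a point of
`ℝ × I`. Those follow by differentiating the Riemann system in `y` (the mixed partials commute
because the data are `C²`) and taking a linear combination of the differentiated equations.
-/

/-- Partial derivative in the first variable of a function on `ℝ × ℝ`. -/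
noncomputable def pdx (f : ℝ × ℝ → ℝ) (p : ℝ × ℝ) : ℝ := fderiv ℝ f p (1, 0)

open Filter Topology

section SecondDerivative

variable {E F : Type*} [NormedAddCommGroup E] [NormedSpace ℝ E] [NormedAddCommGroup F]
  [NormedSpace ℝ F] {f : E → F} {x : E}

lemma ContDiffAt.differentiableAt_fderiv (hf : ContDiffAt ℝ 2 f x) :
    DifferentiableAt ℝ (fderiv ℝ f) x :=
  (hf.fderiv_right (m := 1) (by norm_num)).differentiableAt one_ne_zero

lemma fderiv_fderiv_apply (hf : ContDiffAt ℝ 2 f x) (u v : E) :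
    fderiv ℝ (fun q => fderiv ℝ f q u) x v = fderiv ℝ (fderiv ℝ f) x v u := by
  rw [fderiv_clm_apply hf.differentiableAt_fderiv (differentiableAt_const u)]
  simp

end SecondDerivative

section PartialDerivatives

variable {f g c : ℝ × ℝ → ℝ} {p : ℝ × ℝ}

lemma fderiv_apply_one_zero_eq_pdx : fderiv ℝ f p (1, 0) = pdx f p := rfl

lemma fderiv_apply_zero_one_eq_pdt : fderiv ℝ f p (0, 1) = pdt f p := rfl

lemma ContDiffAt.differentiableAt_pdx (hf : ContDiffAt ℝ 2 f p) :
    DifferentiableAt ℝ (pdx f) p :=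
  hf.differentiableAt_fderiv.clm_apply (differentiableAt_const _)

lemma ContDiffAt.differentiableAt_pdt (hf : ContDiffAt ℝ 2 f p) :
    DifferentiableAt ℝ (pdt f) p :=
  hf.differentiableAt_fderiv.clm_apply (differentiableAt_const _)

lemma pdt_pdx_comm (hf : ContDiffAt ℝ 2 f p) : pdt (pdx f) p = pdx (pdt f) p := by
  unfold pdt pdx
  rw [fderiv_fderiv_apply hf, fderiv_fderiv_apply hf]
  exact hf.isSymmSndFDerivAt (by simp) _ _

lemma pdt_mul (hf : DifferentiableAt ℝ f p) (hg : DifferentiableAt ℝ g p) :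
    pdt (fun q => f q * g q) p = pdt f p * g p + f p * pdt g p := by
  rw [pdt, fderiv_fun_mul hf hg]
  simp only [add_apply, smul_apply, smul_eq_mul, fderiv_apply_zero_one_eq_pdt]
  ring

lemma pdt_inv (hf : DifferentiableAt ℝ f p) (hf0 : f p ≠ 0) :
    pdt (fun q => (f q)⁻¹) p = -pdt f p / f p ^ 2 := by
  have h := ((hasDerivAt_inv hf0).comp_hasFDerivAt p hf.hasFDerivAt).fderiv
  rw [pdt, show (fun q => (f q)⁻¹) = (fun x => x⁻¹) ∘ f from rfl, h]
  simp only [smul_apply, smul_eq_mul, fderiv_apply_zero_one_eq_pdt]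
  ring

lemma transport_pdx_of_eventually (hf : ContDiffAt ℝ 2 f p) (hc : DifferentiableAt ℝ c p)
    (h : ∀ᶠ q in 𝓝 p, pdt f q + c q * pdx f q = g q) :
    pdt (pdx f) p + c p * pdx (pdx f) p + pdx c p * pdx f p = pdx g p := by
  have hg : g =ᶠ[𝓝 p] fun q => pdt f q + c q * pdx f q := h.mono fun q hq => hq.symm
  have hfx := hf.differentiableAt_pdx
  have hft := hf.differentiableAt_pdt
  rw [pdt_pdx_comm hf, ← fderiv_apply_one_zero_eq_pdx (f := g), hg.fderiv_eq]
  simp (disch := fun_prop) only [fderiv_fun_add, fderiv_fun_mul, add_apply, smul_apply, smul_eq_mul,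
    fderiv_apply_one_zero_eq_pdx]
  ring

end PartialDerivatives

section Lagrangian

variable {f c η : ℝ × ℝ → ℝ} {p : ℝ × ℝ}

lemma hasFDerivAt_comp_lagrange (hf : DifferentiableAt ℝ f (η p, p.2))
    (hη : DifferentiableAt ℝ η p) :
    HasFDerivAt (fun q => f (η q, q.2))
      ((fderiv ℝ f (η p, p.2)).comp ((fderiv ℝ η p).prod (.snd ℝ ℝ ℝ))) p :=
  hf.hasFDerivAt.comp p (hη.hasFDerivAt.prodMk hasFDerivAt_snd)

lemma DifferentiableAt.comp_lagrange (hf : DifferentiableAt ℝ f (η p, p.2))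
    (hη : DifferentiableAt ℝ η p) : DifferentiableAt ℝ (fun q => f (η q, q.2)) p :=
  (hasFDerivAt_comp_lagrange hf hη).differentiableAt

lemma pdx_comp_lagrange (hf : DifferentiableAt ℝ f (η p, p.2)) (hη : DifferentiableAt ℝ η p) :
    pdx (fun q => f (η q, q.2)) p = pdx f (η p, p.2) * pdx η p := by
  have hv : (fderiv ℝ η p).prod (.snd ℝ ℝ ℝ) (1, 0) = pdx η p • (1, 0) := by simp [pdx]
  rw [pdx, (hasFDerivAt_comp_lagrange hf hη).fderiv, ContinuousLinearMap.comp_apply, hv, map_smul,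
    smul_eq_mul, mul_comm, fderiv_apply_one_zero_eq_pdx]

lemma pdt_comp_lagrange (hf : DifferentiableAt ℝ f (η p, p.2)) (hη : DifferentiableAt ℝ η p)
    (hηt : pdt η p = c (η p, p.2)) :
    pdt (fun q => f (η q, q.2)) p = pdt f (η p, p.2) + c (η p, p.2) * pdx f (η p, p.2) := by
  have hv : (fderiv ℝ η p).prod (.snd ℝ ℝ ℝ) (0, 1) = (0, 1) + c (η p, p.2) • (1, 0) := by
    simp [← hηt, pdt]
  rw [pdt, (hasFDerivAt_comp_lagrange hf hη).fderiv, ContinuousLinearMap.comp_apply, hv, map_add,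
    map_smul, smul_eq_mul, fderiv_apply_one_zero_eq_pdx, fderiv_apply_zero_one_eq_pdt]

lemma pdt_pdx_of_eventually_pdt_eq (hη : ContDiffAt ℝ 2 η p)
    (hc : DifferentiableAt ℝ c (η p, p.2)) (h : ∀ᶠ q in 𝓝 p, pdt η q = c (η q, q.2)) :
    pdt (pdx η) p = pdx c (η p, p.2) * pdx η p := by
  have hη' : pdt η =ᶠ[𝓝 p] fun q => c (η q, q.2) := h
  rw [pdt_pdx_comm hη, ← pdx_comp_lagrange hc (hη.differentiableAt two_ne_zero)]
  exact congrArg (fun L : ℝ × ℝ →L[ℝ] ℝ => L (1, 0)) hη'.fderiv_eq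

end Lagrangian

noncomputable section

namespace Riemann

variable (α γ : ℝ) (w z k : ℝ × ℝ → ℝ)

def sigma : ℝ × ℝ → ℝ := fun p => (w p - z p) / 2

def lam1 : ℝ × ℝ → ℝ := fun p => (1 - α) / 2 * w p + (1 + α) / 2 * z p

def lam2 : ℝ × ℝ → ℝ := fun p => (w p + z p) / 2

def lam3 : ℝ × ℝ → ℝ := fun p => (1 + α) / 2 * w p + (1 - α) / 2 * z p

/-- The differentiated Riemann variable `ẘ`; `z̊` is `zRing`, and `k̊` is simply `pdx k`. -/
def wRing : ℝ × ℝ → ℝ := fun p => pdx w p - 1 / (2 * γ) * sigma w z p * pdx k p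

def zRing : ℝ × ℝ → ℝ := fun p => pdx z p + 1 / (2 * γ) * sigma w z p * pdx k p

structure IsSolutionOn (U : Set (ℝ × ℝ)) : Prop where
  isOpen : IsOpen U
  contDiffOn_w : ContDiffOn ℝ 2 w U
  contDiffOn_z : ContDiffOn ℝ 2 z U
  contDiffOn_k : ContDiffOn ℝ 2 k U
  eq_w : ∀ p ∈ U, pdt w p + lam3 α w z p * pdx w p = α / (2 * γ) * sigma w z p ^ 2 * pdx k p
  eq_z : ∀ p ∈ U, pdt z p + lam1 α w z p * pdx z p = α / (2 * γ) * sigma w z p ^ 2 * pdx k p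
  eq_k : ∀ p ∈ U, pdt k p + lam2 w z p * pdx k p = 0

variable {α γ w z k} {y : ℝ × ℝ} {U : Set (ℝ × ℝ)}

lemma pdx_sigma (hw : DifferentiableAt ℝ w y) (hz : DifferentiableAt ℝ z y) :
    pdx (sigma w z) y = (wRing γ w z k y - zRing γ w z k y) / 2
      + 1 / (2 * γ) * sigma w z y * pdx k y := by
  unfold wRing zRing sigma pdx
  simp (disch := fun_prop) only [fderiv_fun_sub, fderiv_fun_mul, fderiv_const_apply, div_eq_mul_inv,
    add_apply, sub_apply, smul_apply, zero_apply, smul_eq_mul, fderiv_apply_one_zero_eq_pdx]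
  ring

lemma pdx_lam3 (hw : DifferentiableAt ℝ w y) (hz : DifferentiableAt ℝ z y) :
    pdx (lam3 α w z) y = (1 + α) / 2 * wRing γ w z k y + (1 - α) / 2 * zRing γ w z k y
      + α / (2 * γ) * sigma w z y * pdx k y := by
  unfold lam3 wRing zRing sigma pdx
  simp (disch := fun_prop) only [fderiv_fun_add, fderiv_fun_sub, fderiv_fun_mul, fderiv_const_apply,
    div_eq_mul_inv, add_apply, sub_apply, smul_apply, zero_apply, smul_eq_mul,
    fderiv_apply_one_zero_eq_pdx]
  ring

lemma IsSolutionOn.contDiffAt (hs : IsSolutionOn α γ w z k U) (hy : y ∈ U) :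
    ContDiffAt ℝ 2 w y ∧ ContDiffAt ℝ 2 z y ∧ ContDiffAt ℝ 2 k y :=
  have hU := hs.isOpen.mem_nhds hy
  ⟨hs.contDiffOn_w.contDiffAt hU, hs.contDiffOn_z.contDiffAt hU, hs.contDiffOn_k.contDiffAt hU⟩

lemma IsSolutionOn.differentiableAt (hs : IsSolutionOn α γ w z k U) (hy : y ∈ U) :
    DifferentiableAt ℝ w y ∧ DifferentiableAt ℝ z y ∧ DifferentiableAt ℝ k y :=
  have ⟨hw, hz, hk⟩ := hs.contDiffAt hy
  ⟨hw.differentiableAt two_ne_zero, hz.differentiableAt two_ne_zero,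
    hk.differentiableAt two_ne_zero⟩

lemma IsSolutionOn.differentiableAt_sigma (hs : IsSolutionOn α γ w z k U) (hy : y ∈ U) :
    DifferentiableAt ℝ (sigma w z) y := by
  obtain ⟨hw, hz, -⟩ := hs.differentiableAt hy
  unfold sigma
  fun_prop

lemma IsSolutionOn.differentiableAt_wRing (hs : IsSolutionOn α γ w z k U) (hy : y ∈ U) :
    DifferentiableAt ℝ (wRing γ w z k) y := by
  have hσ := hs.differentiableAt_sigma hy
  obtain ⟨hw, -, hk⟩ := hs.contDiffAt hy
  have hwx := hw.differentiableAt_pdx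
  have hkx := hk.differentiableAt_pdx
  unfold wRing
  fun_prop

lemma IsSolutionOn.differentiableAt_zRing (hs : IsSolutionOn α γ w z k U) (hy : y ∈ U) :
    DifferentiableAt ℝ (zRing γ w z k) y := by
  have hσ := hs.differentiableAt_sigma hy
  obtain ⟨-, hz, hk⟩ := hs.contDiffAt hy
  have hzx := hz.differentiableAt_pdx
  have hkx := hk.differentiableAt_pdx
  unfold zRing
  fun_prop

lemma IsSolutionOn.transport_sigma (hs : IsSolutionOn α γ w z k U) (hy : y ∈ U) :
    pdt (sigma w z) y + lam3 α w z y * pdx (sigma w z) y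
      = -α * sigma w z y * zRing γ w z k y + α / (2 * γ) * sigma w z y ^ 2 * pdx k y := by
  obtain ⟨hw, hz, -⟩ := hs.differentiableAt hy
  have ew := hs.eq_w y hy
  have ez := hs.eq_z y hy
  unfold zRing lam1 lam3 sigma pdx pdt at *
  simp (disch := fun_prop) only [fderiv_fun_sub, fderiv_fun_mul, fderiv_const_apply, div_eq_mul_inv,
    add_apply, sub_apply, smul_apply, zero_apply, smul_eq_mul, fderiv_apply_one_zero_eq_pdx,
    fderiv_apply_zero_one_eq_pdt] at *
  linear_combination ew / 2 - ez / 2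

lemma IsSolutionOn.transport_pdx_k (hs : IsSolutionOn α γ w z k U) (hy : y ∈ U) :
    pdt (pdx k) y + lam3 α w z y * pdx (pdx k) y
      = α * sigma w z y * pdx (pdx k) y
        - 1 / 2 * pdx k y * (wRing γ w z k y + zRing γ w z k y) := by
  obtain ⟨hw, hz, -⟩ := hs.differentiableAt hy
  have dk := transport_pdx_of_eventually (hs.contDiffAt hy).2.2 (by unfold lam2; fun_prop)
    (eventually_of_mem (hs.isOpen.mem_nhds hy) hs.eq_k)
  unfold wRing zRing lam2 lam3 sigma pdx pdt at *
  simp (disch := fun_prop) only [fderiv_fun_add, fderiv_fun_mul, fderiv_const_apply, div_eq_mul_inv,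
    add_apply, smul_apply, zero_apply, smul_eq_mul, fderiv_apply_one_zero_eq_pdx,
    fderiv_apply_zero_one_eq_pdt] at *
  linear_combination dk

lemma IsSolutionOn.transport_zRing (hs : IsSolutionOn α γ w z k U) (hy : y ∈ U) :
    pdt (zRing γ w z k) y + lam3 α w z y * pdx (zRing γ w z k) y
      = 2 * α * sigma w z y * pdx (zRing γ w z k) y
        - (1 - α) / 2 * wRing γ w z k y * zRing γ w z k y
        - α / (4 * γ) * sigma w z y * pdx k y * wRing γ w z k y
        - (1 + α) / 2 * zRing γ w z k y ^ 2
        + α / (4 * γ) * sigma w z y * pdx k y * zRing γ w z k y := by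
  obtain ⟨-, hz, hk⟩ := hs.contDiffAt hy
  obtain ⟨hw', hz', -⟩ := hs.differentiableAt hy
  have dk := transport_pdx_of_eventually hk (by unfold lam2; fun_prop)
    (eventually_of_mem (hs.isOpen.mem_nhds hy) hs.eq_k)
  have dz := transport_pdx_of_eventually hz (by unfold lam1; fun_prop)
    (eventually_of_mem (hs.isOpen.mem_nhds hy) hs.eq_z)
  have ew := hs.eq_w y hy
  have ez := hs.eq_z y hy
  unfold wRing zRing lam1 lam2 lam3 sigma pdx pdt at *
  have hkx := hk.differentiableAt_pdx
  have hzx := hz.differentiableAt_pdx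
  simp (disch := fun_prop) only [fderiv_fun_add, fderiv_fun_sub, fderiv_fun_mul, fderiv_fun_pow,
    fderiv_const_apply, div_eq_mul_inv, add_apply, sub_apply, smul_apply, zero_apply, smul_eq_mul,
    nsmul_eq_mul, fderiv_apply_one_zero_eq_pdx, fderiv_apply_zero_one_eq_pdt] at *
  linear_combination dz + (w y - z y) / (4 * γ) * dk + pdx k y / (4 * γ) * (ew - ez)

lemma IsSolutionOn.transport_wRing (hs : IsSolutionOn α γ w z k U) (hy : y ∈ U) :
    pdt (wRing γ w z k) y + lam3 α w z y * pdx (wRing γ w z k) y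
        + pdx (lam3 α w z) y * wRing γ w z k y
      = α / (4 * γ) * sigma w z y * pdx k y * (wRing γ w z k y + zRing γ w z k y) := by
  obtain ⟨hw, -, hk⟩ := hs.contDiffAt hy
  obtain ⟨hw', hz', -⟩ := hs.differentiableAt hy
  have dk := transport_pdx_of_eventually hk (by unfold lam2; fun_prop)
    (eventually_of_mem (hs.isOpen.mem_nhds hy) hs.eq_k)
  have dw := transport_pdx_of_eventually hw (by unfold lam3; fun_prop)
    (eventually_of_mem (hs.isOpen.mem_nhds hy) hs.eq_w)
  have ew := hs.eq_w y hy
  have ez := hs.eq_z y hy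
  unfold wRing zRing lam1 lam2 lam3 sigma pdx pdt at *
  have hkx := hk.differentiableAt_pdx
  have hwx := hw.differentiableAt_pdx
  simp (disch := fun_prop) only [fderiv_fun_add, fderiv_fun_sub, fderiv_fun_mul, fderiv_fun_pow,
    fderiv_const_apply, div_eq_mul_inv, add_apply, sub_apply, smul_apply, zero_apply, smul_eq_mul,
    nsmul_eq_mul, fderiv_apply_one_zero_eq_pdx, fderiv_apply_zero_one_eq_pdt] at *
  linear_combination dw - (w y - z y) / (4 * γ) * dk - pdx k y / (4 * γ) * (ew - ez)

end Riemann

end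

theorem statement1_general
    (α γ : ℝ)
    (I : Set ℝ) (hIopen : IsOpen I)
    (D : Set (ℝ × ℝ)) (hD : D = {p : ℝ × ℝ | p.2 ∈ I})
    (w z k η : ℝ × ℝ → ℝ)
    (hw : ContDiffOn ℝ 2 w D) (hz : ContDiffOn ℝ 2 z D)
    (hk : ContDiffOn ℝ 2 k D) (hη : ContDiffOn ℝ 2 η D)
    (σ lam1 lam2 lam3 Wr Zr Kr : ℝ × ℝ → ℝ)
    (hσ : σ = fun p => (w p - z p) / 2)
    (hl1 : lam1 = fun p => (1 - α) / 2 * w p + (1 + α) / 2 * z p)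
    (hl2 : lam2 = fun p => (w p + z p) / 2)
    (hl3 : lam3 = fun p => (1 + α) / 2 * w p + (1 - α) / 2 * z p)
    (hWr : Wr = fun p => pdx w p - 1 / (2 * γ) * σ p * pdx k p)
    (hZr : Zr = fun p => pdx z p + 1 / (2 * γ) * σ p * pdx k p)
    (hKr : Kr = fun p => pdx k p)
    (heq1 : ∀ p ∈ D, pdt w p + lam3 p * pdx w p = α / (2 * γ) * σ p ^ 2 * pdx k p)
    (heq2 : ∀ p ∈ D, pdt z p + lam1 p * pdx z p = α / (2 * γ) * σ p ^ 2 * pdx k p)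
    (heq3 : ∀ p ∈ D, pdt k p + lam2 p * pdx k p = 0)
    (hσpos : ∀ p ∈ D, 0 < σ p)
    (hηt : ∀ p ∈ D, pdt η p = lam3 (η p, p.2))
    (Sig W Z K ηx : ℝ × ℝ → ℝ)
    (hSig : Sig = fun p => σ (η p, p.2))
    (hW : W = fun p => Wr (η p, p.2))
    (hZ : Z = fun p => Zr (η p, p.2))
    (hK : K = fun p => Kr (η p, p.2))
    (hηx : ηx = fun p => pdx η p) :
    ∀ p ∈ D,
      (pdt Sig p = -α * Sig p * Z p + α / (2 * γ) * Sig p ^ 2 * K p) ∧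
      (pdx Sig p =
        1 / 2 * ηx p * W p - 1 / 2 * ηx p * Z p + 1 / (2 * γ) * ηx p * Sig p * K p) ∧
      (pdt (fun q => (Sig q)⁻¹) p = α * (Sig p)⁻¹ * Z p - α / (2 * γ) * K p) ∧
      (pdt ηx p =
        (1 + α) / 2 * ηx p * W p + (1 - α) / 2 * ηx p * Z p
          + α / (2 * γ) * ηx p * Sig p * K p) ∧
      (pdt (fun q => ηx q * W q) p =
        α / (4 * γ) * Sig p * K p * (ηx p * W p + ηx p * Z p)) ∧
      (ηx p * pdt K p =
        α * Sig p * pdx K p - 1 / 2 * K p * (ηx p * W p) - 1 / 2 * ηx p * K p * Z p) ∧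
      (ηx p * pdt Z p =
        2 * α * Sig p * pdx Z p - (1 - α) / 2 * (ηx p * W p) * Z p
          - α / (4 * γ) * Sig p * K p * (ηx p * W p) - (1 + α) / 2 * ηx p * Z p ^ 2
          + α / (4 * γ) * ηx p * Sig p * K p * Z p) := by
  obtain rfl : σ = Riemann.sigma w z := hσ
  obtain rfl : lam1 = Riemann.lam1 α w z := hl1
  obtain rfl : lam2 = Riemann.lam2 w z := hl2
  obtain rfl : lam3 = Riemann.lam3 α w z := hl3
  obtain rfl : Wr = Riemann.wRing γ w z k := hWr
  obtain rfl : Zr = Riemann.zRing γ w z k := hZr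
  obtain rfl : Kr = pdx k := hKr
  obtain rfl : ηx = pdx η := hηx
  subst hD hSig hW hZ hK
  have hs : Riemann.IsSolutionOn α γ w z k {p | p.2 ∈ I} :=
    ⟨hIopen.preimage continuous_snd, hw, hz, hk, heq1, heq2, heq3⟩
  intro p hp
  have hy : (η p, p.2) ∈ {p : ℝ × ℝ | p.2 ∈ I} := hp
  have hηp : ContDiffAt ℝ 2 η p := hη.contDiffAt (hs.isOpen.mem_nhds hp)
  have hηd := hηp.differentiableAt two_ne_zero
  obtain ⟨hw', hz', -⟩ := hs.differentiableAt hy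
  have hσd := hs.differentiableAt_sigma hy
  have hWd := hs.differentiableAt_wRing hy
  have hZd := hs.differentiableAt_zRing hy
  have hKd := (hs.contDiffAt hy).2.2.differentiableAt_pdx
  have hσ0 := (hσpos _ hy).ne'
  have hηt' := hηt p hp
  have hηxt : pdt (pdx η) p = pdx (Riemann.lam3 α w z) (η p, p.2) * pdx η p :=
    pdt_pdx_of_eventually_pdt_eq hηp (by unfold Riemann.lam3; fun_prop)
      (eventually_of_mem (hs.isOpen.mem_nhds hp) hηt)
  beta_reduce
  refine ⟨?_, ?_, ?_, ?_, ?_, ?_, ?_⟩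
  · rw [pdt_comp_lagrange hσd hηd hηt', hs.transport_sigma hy]
  · rw [pdx_comp_lagrange hσd hηd, Riemann.pdx_sigma (k := k) (γ := γ) hw' hz']
    ring
  · rw [pdt_inv (hσd.comp_lagrange hηd) hσ0, pdt_comp_lagrange hσd hηd hηt',
      hs.transport_sigma hy]
    field_simp
    ring
  · rw [hηxt, Riemann.pdx_lam3 (k := k) (γ := γ) hw' hz']
    ring
  · rw [pdt_mul hηp.differentiableAt_pdx (hWd.comp_lagrange hηd), hηxt,
      pdt_comp_lagrange hWd hηd hηt']
    linear_combination pdx η p * hs.transport_wRing hy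
  · rw [pdt_comp_lagrange hKd hηd hηt', pdx_comp_lagrange hKd hηd]
    linear_combination pdx η p * hs.transport_pdx_k hy
  · rw [pdt_comp_lagrange hZd hηd hηt', pdx_comp_lagrange hZd hηd]
    linear_combination pdx η p * hs.transport_zRing hy

theorem statement1
    (α γ : ℝ) (hα : 0 < α) (hγ : γ = 2 * α + 1)
    (I : Set ℝ) (hIopen : IsOpen I) (hIord : I.OrdConnected)
    (D : Set (ℝ × ℝ)) (hD : D = {p : ℝ × ℝ | p.2 ∈ I})
    (w z k η : ℝ × ℝ → ℝ)
    (hw : ContDiffOn ℝ 2 w D) (hz : ContDiffOn ℝ 2 z D)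
    (hk : ContDiffOn ℝ 2 k D) (hη : ContDiffOn ℝ 2 η D)
    (σ lam1 lam2 lam3 Wr Zr Kr : ℝ × ℝ → ℝ)
    (hσ : σ = fun p => (w p - z p) / 2)
    (hl1 : lam1 = fun p => (1 - α) / 2 * w p + (1 + α) / 2 * z p)
    (hl2 : lam2 = fun p => (w p + z p) / 2)
    (hl3 : lam3 = fun p => (1 + α) / 2 * w p + (1 - α) / 2 * z p)
    (hWr : Wr = fun p => pdx w p - 1 / (2 * γ) * σ p * pdx k p)
    (hZr : Zr = fun p => pdx z p + 1 / (2 * γ) * σ p * pdx k p)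
    (hKr : Kr = fun p => pdx k p)
    (heq1 : ∀ p ∈ D, pdt w p + lam3 p * pdx w p = α / (2 * γ) * σ p ^ 2 * pdx k p)
    (heq2 : ∀ p ∈ D, pdt z p + lam1 p * pdx z p = α / (2 * γ) * σ p ^ 2 * pdx k p)
    (heq3 : ∀ p ∈ D, pdt k p + lam2 p * pdx k p = 0)
    (hσpos : ∀ p ∈ D, 0 < σ p)
    (hηt : ∀ p ∈ D, pdt η p = lam3 (η p, p.2))
    (Sig W Z K ηx : ℝ × ℝ → ℝ)
    (hSig : Sig = fun p => σ (η p, p.2))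
    (hW : W = fun p => Wr (η p, p.2))
    (hZ : Z = fun p => Zr (η p, p.2))
    (hK : K = fun p => Kr (η p, p.2))
    (hηx : ηx = fun p => pdx η p) :
    ∀ p ∈ D,
      (pdt Sig p = -α * Sig p * Z p + α / (2 * γ) * Sig p ^ 2 * K p) ∧
      (pdx Sig p =
        1 / 2 * ηx p * W p - 1 / 2 * ηx p * Z p + 1 / (2 * γ) * ηx p * Sig p * K p) ∧
      (pdt (fun q => (Sig q)⁻¹) p = α * (Sig p)⁻¹ * Z p - α / (2 * γ) * K p) ∧
      (pdt ηx p =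
        (1 + α) / 2 * ηx p * W p + (1 - α) / 2 * ηx p * Z p
          + α / (2 * γ) * ηx p * Sig p * K p) ∧
      (pdt (fun q => ηx q * W q) p =
        α / (4 * γ) * Sig p * K p * (ηx p * W p + ηx p * Z p)) ∧
      (ηx p * pdt K p =
        α * Sig p * pdx K p - 1 / 2 * K p * (ηx p * W p) - 1 / 2 * ηx p * K p * Z p) ∧
      (ηx p * pdt Z p =
        2 * α * Sig p * pdx Z p - (1 - α) / 2 * (ηx p * W p) * Z p
          - α / (4 * γ) * Sig p * K p * (ηx p * W p) - (1 + α) / 2 * ηx p * Z p ^ 2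
          + α / (4 * γ) * ηx p * Sig p * K p * Z p) :=
  statement1_general α γ I hIopen D hD w z k η hw hz hk hη σ lam1 lam2 lam3 Wr Zr Kr hσ hl1 hl2 hl3
    hWr hZr hKr heq1 heq2 heq3 hσpos hηt Sig W Z K ηx hSig hW hZ hK hηx
end

section
/- Fix an integer n ≥ 1 and let (c_m)_{m≥0} be the associated recursively defined sequence. Let Y ∈ ℝ⟦z⟧ be the formal power series Y := Σ_{j≥0} ((−1)^j c_j / (2n+1)^j) · z^{j+1}. Then Y^{2n+1} + Y^{2n+2} = z^{2n+1} as formal power series in ℝ⟦z⟧. -/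
/-!
Put `k = 2n + 1` and `C = ∑ c_j z^j`. In `[z^m] C^k = ∑_{ℓ₁+⋯+ℓ_k=m} c_{ℓ₁}⋯c_{ℓ_k}` the `k` tuples
with an entry equal to `m` contribute `k c_m` (as `c_0 = 1`), so the recursion says precisely that
`[z^m] C^k = k [z^{m-1}] C^{k+1}` for `m ≥ 1`, i.e. `C^k = 1 + k z C^{k+1}`.
Rescaling `z ↦ -z/k` turns this into `A^k = 1 - z A^{k+1}` for `A(z) = C(-z/k)`, and `Y = z A`,
so `Y^k + Y^{k+1} = z^k (A^k + z A^{k+1}) = z^k`.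
-/

open Finset PowerSeries

theorem PowerSeries.coeff_pow_eq_sum_antidiagonalTuple {R : Type*} [CommSemiring R]
    (φ : R⟦X⟧) (k m : ℕ) :
    coeff m (φ ^ k) = ∑ ℓ ∈ Nat.antidiagonalTuple k m, ∏ i, coeff (ℓ i) φ := by
  classical
  rw [← Fin.prod_const, coeff_prod]
  refine sum_nbij' (⇑) Finsupp.equivFunOnFinite.symm ?_ ?_ ?_ ?_ ?_ <;>
    simp [Nat.mem_antidiagonalTuple, mem_finsuppAntidiag]

theorem Finset.Nat.eq_piSingle_of_mem_antidiagonalTuple {k m : ℕ} {ℓ : Fin k → ℕ} {i : Fin k}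
    (hℓ : ℓ ∈ Nat.antidiagonalTuple k m) (hi : m ≤ ℓ i) : ℓ = Pi.single i m := by
  rw [Nat.mem_antidiagonalTuple] at hℓ
  funext j
  rcases eq_or_ne j i with rfl | hji
  · have : ℓ j ≤ m := hℓ ▸ single_le_sum (fun _ _ => Nat.zero_le _) (mem_univ j)
    rw [Pi.single_eq_same]; omega
  · have : ℓ i + ℓ j ≤ m := by
      rw [← sum_pair hji.symm, ← hℓ]
      exact sum_le_sum_of_subset (subset_univ _)
    rw [Pi.single_eq_of_ne hji]; omega

theorem Finset.Nat.filter_antidiagonalTuple_not_forall_le (k : ℕ) {m : ℕ} (hm : m ≠ 0) :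
    (Nat.antidiagonalTuple k m).filter (fun ℓ => ¬ ∀ i, ℓ i ≤ m - 1) =
      univ.image fun i => Pi.single i m := by
  ext ℓ
  simp only [mem_filter, mem_image, mem_univ, true_and, not_forall, not_le]
  constructor
  · rintro ⟨hℓ, i, hi⟩
    exact ⟨i, (eq_piSingle_of_mem_antidiagonalTuple hℓ (by omega)).symm⟩
  · rintro ⟨i, rfl⟩
    exact ⟨by simp [Nat.mem_antidiagonalTuple], i, by rw [Pi.single_eq_same]; omega⟩

theorem Finset.Nat.sum_prod_antidiagonalTuple_eq_sum_filter_add {R : Type*} [CommSemiring R]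
    {c : ℕ → R} (hc0 : c 0 = 1) (k : ℕ) {m : ℕ} (hm : m ≠ 0) :
    ∑ ℓ ∈ Nat.antidiagonalTuple k m, ∏ i, c (ℓ i) =
      ∑ ℓ ∈ (Nat.antidiagonalTuple k m).filter (fun ℓ => ∀ i, ℓ i ≤ m - 1), ∏ i, c (ℓ i)
        + k * c m := by
  have hinj : Set.InjOn (fun i : Fin k => Pi.single i m) (univ : Finset (Fin k)) :=
    fun i _ j _ h => by_contra fun hij => by simpa [Pi.single_eq_of_ne hij, hm] using congrFun h i
  rw [← sum_filter_add_sum_filter_not _ (fun ℓ => ∀ i, ℓ i ≤ m - 1),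
    filter_antidiagonalTuple_not_forall_le k hm, sum_image hinj]
  simp [Pi.single_apply, apply_ite c, hc0, prod_ite_eq']

theorem PowerSeries.mk_pow_eq_one_add_X_mul {K : Type*} [Field K] {k : ℕ} (hk : (k : K) ≠ 0)
    {c : ℕ → K} (hc0 : c 0 = 1)
    (hcrec : ∀ m : ℕ, 1 ≤ m →
      c m = (∑ ℓ ∈ Nat.antidiagonalTuple (k + 1) (m - 1), ∏ i, c (ℓ i))
        - 1 / (k : K) *
          ∑ j ∈ (Nat.antidiagonalTuple k m).filter (fun j => ∀ i, j i ≤ m - 1), ∏ i, c (j i)) :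
    mk c ^ k = 1 + (k : K⟦X⟧) * X * mk c ^ (k + 1) := by
  ext m
  rcases m with _ | m
  · simp [coeff_pow_eq_sum_antidiagonalTuple, Nat.antidiagonalTuple_zero_right, hc0]
  · rw [map_add, coeff_one, if_neg m.succ_ne_zero, zero_add, ← map_natCast C, mul_assoc,
      coeff_C_mul, coeff_succ_X_mul, coeff_pow_eq_sum_antidiagonalTuple,
      coeff_pow_eq_sum_antidiagonalTuple]
    simp only [coeff_mk]
    rw [Nat.sum_prod_antidiagonalTuple_eq_sum_filter_add (m := m + 1) hc0 k m.succ_ne_zero,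
      hcrec (m + 1) m.succ_pos, add_tsub_cancel_right]
    field_simp
    ring

theorem PowerSeries.X_mul_rescale_pow_add_pow_succ_eq_X_pow {R : Type*} [CommRing R] {k : ℕ}
    {t : R} (ht : k * t = -1) {φ : R⟦X⟧} (hφ : φ ^ k = 1 + (k : R⟦X⟧) * X * φ ^ (k + 1)) :
    (X * rescale t φ) ^ k + (X * rescale t φ) ^ (k + 1) = X ^ k := by
  have hkt : (k : R⟦X⟧) * C t = -1 := by rw [← map_natCast C, ← map_mul, ht, map_neg, map_one]
  have hA : rescale t φ ^ k = 1 + (k : R⟦X⟧) * (C t * X) * rescale t φ ^ (k + 1) := by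
    rw [← map_pow, hφ, map_add, map_one, map_mul, map_mul, map_natCast, rescale_X, map_pow]
  linear_combination X ^ k * hA + X ^ (k + 1) * rescale t φ ^ (k + 1) * hkt

theorem statement3_general (n : ℕ) (c : ℕ → ℚ)
    (hc0 : c 0 = 1)
    (hcrec : ∀ m : ℕ, 1 ≤ m →
      c m = (∑ ℓ ∈ Finset.Nat.antidiagonalTuple (2 * n + 2) (m - 1), ∏ i, c (ℓ i))
        - 1 / (2 * (n : ℚ) + 1) *
          ∑ j ∈ (Finset.Nat.antidiagonalTuple (2 * n + 1) m).filter
              (fun j => ∀ i, j i ≤ m - 1), ∏ i, c (j i))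
    (Y : PowerSeries ℝ)
    (hY : Y = PowerSeries.mk fun j =>
      if j = 0 then 0
      else (-1 : ℝ) ^ (j - 1) * (c (j - 1) : ℝ) / (2 * (n : ℝ) + 1) ^ (j - 1)) :
    Y ^ (2 * n + 1) + Y ^ (2 * n + 2) = (PowerSeries.X : PowerSeries ℝ) ^ (2 * n + 1) := by
  have hC := mk_pow_eq_one_add_X_mul (k := 2 * n + 1) (by positivity) hc0
    (by exact_mod_cast hcrec)
  have ht : ((2 * n + 1 : ℕ) : ℚ) * (-1 / (2 * n + 1)) = -1 := by
    push_cast; field_simp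
  have hYc : Y = PowerSeries.map (Rat.castHom ℝ)
      (X * rescale (-1 / (2 * n + 1) : ℚ) (PowerSeries.mk c)) := by
    ext (_ | j)
    · simp [hY]
    · rw [hY, coeff_mk, if_neg j.succ_ne_zero, coeff_map, coeff_succ_X_mul, coeff_rescale,
        coeff_mk, add_tsub_cancel_right, eq_ratCast]
      push_cast
      ring
  rw [hYc, ← map_pow, ← map_pow, ← map_add, X_mul_rescale_pow_add_pow_succ_eq_X_pow ht hC,
    map_pow, map_X]

theorem statement3 (n : ℕ) (hn : 1 ≤ n) (c : ℕ → ℚ)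
    (hc0 : c 0 = 1)
    (hcrec : ∀ m : ℕ, 1 ≤ m →
      c m = (∑ ℓ ∈ Finset.Nat.antidiagonalTuple (2 * n + 2) (m - 1), ∏ i, c (ℓ i))
        - 1 / (2 * (n : ℚ) + 1) *
          ∑ j ∈ (Finset.Nat.antidiagonalTuple (2 * n + 1) m).filter
              (fun j => ∀ i, j i ≤ m - 1), ∏ i, c (j i))
    (Y : PowerSeries ℝ)
    (hY : Y = PowerSeries.mk fun j =>
      if j = 0 then 0
      else (-1 : ℝ) ^ (j - 1) * (c (j - 1) : ℝ) / (2 * (n : ℝ) + 1) ^ (j - 1)) :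
    Y ^ (2 * n + 1) + Y ^ (2 * n + 2) = (PowerSeries.X : PowerSeries ℝ) ^ (2 * n + 1) :=
  statement3_general n c hc0 hcrec Y hY
end

section
/- Fix an integer n ≥ 1 and let (c_m)_{m≥0} be the associated recursively defined sequence. Then there exists a real constant C ≥ 1 such that |c_m| ≤ C^m for every m ≥ 0. Consequently, the real power series Σ_{m≥0} ((−1)^m c_m / (2n+1)^m) x^m has a positive radius of convergence. -/
/-!
A majorant argument. The weights `w m = 1 / (m + 1) ^ 2` are almost closed under convolution:
summing `∏ w (j i)` over the `k`-tuples `j` with sum `m` gives at most `16 ^ k * w m`.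
By strong induction, `|c m| ≤ ε * A ^ m * w m` for `m ≥ 1`. The first sum of the recursion is then
at most `16 ^ (k + 1) * A ^ (m - 1) * w (m - 1) ≤ 4 * 16 ^ (k + 1) * A ^ (m - 1) * w m`. In the
second sum every part of a tuple is smaller than `m`, so at least two parts are nonzero and each
of them contributes a factor `ε`; this sum is at most `ε ^ 2 * 16 ^ k * A ^ m * w m`. For
`ε = 1 / (2 * 16 ^ k)` and `A = 16 ^ (2 * k + 2)` the two bounds add up to `ε * A ^ m * w m`.
Hence `|c m| ≤ A ^ m`, and the series converges for `|x| < 1 / A`.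
-/

open Finset

def invSqSucc (m : ℕ) : ℚ := 1 / ((m : ℚ) + 1) ^ 2

lemma invSqSucc_pos (m : ℕ) : 0 < invSqSucc m := by unfold invSqSucc; positivity

lemma invSqSucc_zero : invSqSucc 0 = 1 := by norm_num [invSqSucc]

lemma invSqSucc_le_one (m : ℕ) : invSqSucc m ≤ 1 := by
  unfold invSqSucc
  rw [div_le_one (by positivity)]
  nlinarith [(m.cast_nonneg : (0 : ℚ) ≤ m)]

lemma invSqSucc_le_four_mul {a m : ℕ} (h : m + 1 ≤ 2 * (a + 1)) :
    invSqSucc a ≤ 4 * invSqSucc m := by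
  have h' : (m : ℚ) + 1 ≤ 2 * ((a : ℚ) + 1) := by exact_mod_cast h
  unfold invSqSucc
  rw [mul_one_div, div_le_div_iff₀ (by positivity) (by positivity)]
  nlinarith [(m.cast_nonneg : (0 : ℚ) ≤ m)]

lemma sum_range_invSqSucc_le (N : ℕ) : ∑ a ∈ range N, invSqSucc a ≤ 2 := by
  have telescope (a : ℕ) :
      invSqSucc a ≤ 2 / ((a : ℚ) + 1) - 2 / (((a + 1 : ℕ) : ℚ) + 1) := by
    unfold invSqSucc
    push_cast
    rw [div_sub_div _ _ (by positivity) (by positivity), div_le_div_iff₀ (by positivity) (by positivity)]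
    nlinarith [(a.cast_nonneg : (0 : ℚ) ≤ a)]
  calc ∑ a ∈ range N, invSqSucc a
      ≤ ∑ a ∈ range N, (2 / ((a : ℚ) + 1) - 2 / (((a + 1 : ℕ) : ℚ) + 1)) :=
        sum_le_sum fun a _ => telescope a
    _ = 2 - 2 / ((N : ℚ) + 1) := by
        rw [sum_range_sub' (fun a : ℕ => 2 / ((a : ℚ) + 1))]; norm_num
    _ ≤ 2 := by linarith [show (0 : ℚ) ≤ 2 / ((N : ℚ) + 1) by positivity]

lemma invSqSucc_mul_le {a b m : ℕ} (h : a + b = m) :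
    invSqSucc a * invSqSucc b ≤ 4 * invSqSucc m * (invSqSucc a + invSqSucc b) := by
  wlog hba : b ≤ a generalizing a b
  · linarith [this (b := a) (a := b) (by omega) (by omega)]
  have := invSqSucc_le_four_mul (a := a) (m := m) (by omega)
  nlinarith [invSqSucc_pos a, invSqSucc_pos b, invSqSucc_pos m]

lemma sum_antidiagonal_invSqSucc_mul_le (m : ℕ) :
    ∑ p ∈ antidiagonal m, invSqSucc p.1 * invSqSucc p.2 ≤ 16 * invSqSucc m := by
  have hfst : ∑ p ∈ antidiagonal m, invSqSucc p.1 ≤ 2 := by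
    rw [Nat.sum_antidiagonal_eq_sum_range_succ_mk]
    exact sum_range_invSqSucc_le _
  have hsnd : ∑ p ∈ antidiagonal m, invSqSucc p.2 ≤ 2 := by
    rw [← Nat.sum_antidiagonal_swap]
    exact hfst
  calc ∑ p ∈ antidiagonal m, invSqSucc p.1 * invSqSucc p.2
      ≤ ∑ p ∈ antidiagonal m, 4 * invSqSucc m * (invSqSucc p.1 + invSqSucc p.2) :=
        sum_le_sum fun p hp => invSqSucc_mul_le (mem_antidiagonal.mp hp)
    _ = 4 * invSqSucc m * (∑ p ∈ antidiagonal m, invSqSucc p.1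
          + ∑ p ∈ antidiagonal m, invSqSucc p.2) := by
        rw [← sum_add_distrib, mul_sum]
    _ ≤ 16 * invSqSucc m := by nlinarith [invSqSucc_pos m]

lemma sum_piAntidiag_cons_prod {ι R : Type*} [DecidableEq ι] [CommSemiring R] (F : ℕ → R)
    {i : ι} {s : Finset ι} (hi : i ∉ s) (m : ℕ) :
    ∑ f ∈ (cons i s hi).piAntidiag m, ∏ j ∈ cons i s hi, F (f j)
      = ∑ p ∈ antidiagonal m, F p.1 * ∑ g ∈ s.piAntidiag p.2, ∏ j ∈ s, F (g j) := by
  rw [piAntidiag_cons hi, sum_disjiUnion]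
  refine sum_congr rfl fun p _ => ?_
  rw [sum_map, mul_sum]
  refine sum_congr rfl fun g hg => ?_
  have hgi : g i = 0 := by
    by_contra h
    exact hi ((mem_piAntidiag.mp hg).2 i h)
  rw [prod_cons]
  congr 1
  · simp [hgi]
  · refine prod_congr rfl fun j hj => ?_
    simp [show j ≠ i from fun h => hi (h ▸ hj)]

lemma sum_piAntidiag_prod_invSqSucc_le {ι : Type*} [DecidableEq ι] (s : Finset ι) (m : ℕ) :
    ∑ f ∈ s.piAntidiag m, ∏ i ∈ s, invSqSucc (f i) ≤ 16 ^ #s * invSqSucc m := by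
  induction s using Finset.cons_induction generalizing m with
  | empty =>
    rcases eq_or_ne m 0 with rfl | hm
    · simp [invSqSucc_zero]
    · simpa [piAntidiag_empty_of_ne_zero hm] using (invSqSucc_pos m).le
  | cons i s hi ih =>
    rw [sum_piAntidiag_cons_prod _ hi, card_cons]
    calc ∑ p ∈ antidiagonal m, invSqSucc p.1 * ∑ g ∈ s.piAntidiag p.2, ∏ j ∈ s, invSqSucc (g j)
        ≤ ∑ p ∈ antidiagonal m, invSqSucc p.1 * (16 ^ #s * invSqSucc p.2) :=
          sum_le_sum fun p _ => mul_le_mul_of_nonneg_left (ih p.2) (invSqSucc_pos _).le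
      _ = 16 ^ #s * ∑ p ∈ antidiagonal m, invSqSucc p.1 * invSqSucc p.2 := by
          rw [mul_sum]; exact sum_congr rfl fun p _ => by ring
      _ ≤ 16 ^ #s * (16 * invSqSucc m) :=
          mul_le_mul_of_nonneg_left (sum_antidiagonal_invSqSucc_mul_le m) (by positivity)
      _ = 16 ^ (#s + 1) * invSqSucc m := by ring

lemma sum_antidiagonalTuple_prod_invSqSucc_le (k m : ℕ) :
    ∑ j ∈ Nat.antidiagonalTuple k m, ∏ i, invSqSucc (j i) ≤ 16 ^ k * invSqSucc m := by
  rw [← piAntidiag_univ_fin_eq_antidiagonalTuple]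
  simpa using sum_piAntidiag_prod_invSqSucc_le (univ : Finset (Fin k)) m

def majorant (ε A : ℚ) (m : ℕ) : ℚ := (if m = 0 then 1 else ε) * A ^ m * invSqSucc m

lemma majorant_le_pow {ε A : ℚ} (hε₀ : 0 ≤ ε) (hε₁ : ε ≤ 1) (hA : 0 ≤ A) (m : ℕ) :
    majorant ε A m ≤ A ^ m := by
  have hif : (if m = 0 then 1 else ε) ≤ 1 := by split_ifs <;> linarith
  have hif₀ : 0 ≤ (if m = 0 then 1 else ε) := by split_ifs <;> linarith
  have hw := invSqSucc_pos m
  calc majorant ε A m ≤ 1 * A ^ m * 1 := by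
        unfold majorant
        gcongr
        exact invSqSucc_le_one m
    _ = A ^ m := by ring

lemma prod_majorant {ι : Type*} [Fintype ι] (ε A : ℚ) (j : ι → ℕ) :
    ∏ i, majorant ε A (j i) = ε ^ #{i | j i ≠ 0} * A ^ (∑ i, j i) * ∏ i, invSqSucc (j i) := by
  simp only [majorant, prod_mul_distrib, prod_pow_eq_pow_sum, prod_ite, prod_const_one,
    prod_const, one_mul]

lemma two_le_card_filter_ne_zero {ι : Type*} [Fintype ι] {f : ι → ℕ} (hpos : 0 < ∑ i, f i)
    (hlt : ∀ i, f i < ∑ i, f i) : 2 ≤ #{i | f i ≠ 0} := by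
  by_contra! h
  obtain ⟨i, -, hi⟩ := exists_ne_zero_of_sum_ne_zero hpos.ne'
  have hsingle : ∑ i, f i = f i := by
    refine sum_eq_single i (fun b _ hbi => ?_) (by simp)
    by_contra hb
    exact hbi (card_le_one.mp (Nat.le_of_lt_succ h) b (by simpa using hb) i (by simpa using hi))
  exact (hlt i).ne' hsingle

lemma abs_sum_le_of_subset_antidiagonalTuple {k m : ℕ} {T : Finset (Fin k → ℕ)}
    (hT : T ⊆ Nat.antidiagonalTuple k m) {g : (Fin k → ℕ) → ℚ} {B A : ℚ} (hB : 0 ≤ B)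
    (hA : 0 ≤ A) (hg : ∀ j ∈ T, |g j| ≤ B * A ^ m * ∏ i, invSqSucc (j i)) :
    |∑ j ∈ T, g j| ≤ B * A ^ m * (16 ^ k * invSqSucc m) := by
  calc |∑ j ∈ T, g j| ≤ ∑ j ∈ T, |g j| := abs_sum_le_sum_abs _ _
    _ ≤ ∑ j ∈ T, B * A ^ m * ∏ i, invSqSucc (j i) := sum_le_sum hg
    _ ≤ ∑ j ∈ Nat.antidiagonalTuple k m, B * A ^ m * ∏ i, invSqSucc (j i) :=
        sum_le_sum_of_subset_of_nonneg hT fun j _ _ =>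
          mul_nonneg (by positivity) (prod_nonneg fun i _ => (invSqSucc_pos (j i)).le)
    _ ≤ B * A ^ m * (16 ^ k * invSqSucc m) := by
        rw [← mul_sum]
        gcongr
        exact sum_antidiagonalTuple_prod_invSqSucc_le k m

section Recursion

variable {ε A : ℚ} {c : ℕ → ℚ}

lemma abs_prod_le {k : ℕ} {j : Fin k → ℕ} (hc : ∀ i, |c (j i)| ≤ majorant ε A (j i)) :
    |∏ i, c (j i)| ≤ ε ^ #{i | j i ≠ 0} * A ^ (∑ i, j i) * ∏ i, invSqSucc (j i) := by
  rw [abs_prod, ← prod_majorant]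
  exact prod_le_prod (fun i _ => abs_nonneg _) fun i _ => hc i

lemma abs_sum_antidiagonalTuple_prod_le (hε₀ : 0 ≤ ε) (hε₁ : ε ≤ 1) (hA : 0 ≤ A) {k m : ℕ}
    (hc : ∀ ℓ ≤ m, |c ℓ| ≤ majorant ε A ℓ) :
    |∑ j ∈ Nat.antidiagonalTuple k m, ∏ i, c (j i)| ≤ A ^ m * (16 ^ k * invSqSucc m) := by
  rw [← one_mul (A ^ m)]
  refine abs_sum_le_of_subset_antidiagonalTuple subset_rfl zero_le_one hA fun j hj => ?_
  rw [Nat.mem_antidiagonalTuple] at hj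
  have hle : ∀ i, j i ≤ m := fun i => hj ▸ single_le_sum (fun i _ => Nat.zero_le _) (mem_univ i)
  calc |∏ i, c (j i)| ≤ ε ^ #{i | j i ≠ 0} * A ^ (∑ i, j i) * ∏ i, invSqSucc (j i) :=
        abs_prod_le fun i => hc _ (hle i)
    _ ≤ 1 * A ^ m * ∏ i, invSqSucc (j i) := by
        rw [hj]
        have := prod_nonneg fun i (_ : i ∈ univ) => (invSqSucc_pos (j i)).le
        gcongr
        exact pow_le_one₀ hε₀ hε₁

lemma abs_sum_filter_antidiagonalTuple_prod_le (hε₀ : 0 ≤ ε) (hε₁ : ε ≤ 1) (hA : 0 ≤ A)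
    {k m : ℕ} (hm : 1 ≤ m) (hc : ∀ ℓ < m, |c ℓ| ≤ majorant ε A ℓ) :
    |∑ j ∈ (Nat.antidiagonalTuple k m).filter (fun j => ∀ i, j i ≤ m - 1), ∏ i, c (j i)|
      ≤ ε ^ 2 * A ^ m * (16 ^ k * invSqSucc m) := by
  refine abs_sum_le_of_subset_antidiagonalTuple (filter_subset _ _) (by positivity) hA
    fun j hj => ?_
  rw [mem_filter, Nat.mem_antidiagonalTuple] at hj
  obtain ⟨hsum, hle⟩ := hj
  have hlt : ∀ i, j i < m := fun i => by have := hle i; omega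
  calc |∏ i, c (j i)| ≤ ε ^ #{i | j i ≠ 0} * A ^ (∑ i, j i) * ∏ i, invSqSucc (j i) :=
        abs_prod_le fun i => hc _ (hlt i)
    _ ≤ ε ^ 2 * A ^ m * ∏ i, invSqSucc (j i) := by
        rw [hsum]
        have := prod_nonneg fun i (_ : i ∈ univ) => (invSqSucc_pos (j i)).le
        gcongr ?_ * _ * _
        exact pow_le_pow_of_le_one hε₀ hε₁
          (two_le_card_filter_ne_zero (by omega) fun i => hsum ▸ hlt i)

lemma one_div_two_mul_sixteen_pow_le_one (k : ℕ) : 1 / (2 * 16 ^ k : ℚ) ≤ 1 := by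
  rw [div_le_one (by positivity)]
  linarith [one_le_pow₀ (M₀ := ℚ) (a := 16) (by norm_num) (n := k)]

/- The constants are chosen so that `4 * 16 ^ (k + 1) + ε ^ 2 * 16 ^ k * A = ε * A`. -/
lemma add_le_majorant (k : ℕ) {m : ℕ} (hm : 1 ≤ m) :
    (16 ^ (2 * k + 2)) ^ (m - 1) * (16 ^ (k + 1) * invSqSucc (m - 1))
      + (1 / (2 * 16 ^ k)) ^ 2 * (16 ^ (2 * k + 2)) ^ m * (16 ^ k * invSqSucc m)
      ≤ majorant (1 / (2 * 16 ^ k)) (16 ^ (2 * k + 2)) m := by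
  have hw := invSqSucc_le_four_mul (a := m - 1) (m := m) (by omega)
  have hpow : ((16 : ℚ) ^ (2 * k + 2)) ^ m = (16 ^ (2 * k + 2)) ^ (m - 1) * 16 ^ (2 * k + 2) := by
    rw [← pow_succ, Nat.sub_add_cancel hm]
  have hA : (16 : ℚ) ^ (2 * k + 2) = 256 * (16 ^ k) ^ 2 := by ring
  have := invSqSucc_pos m
  calc _ ≤ (16 ^ (2 * k + 2)) ^ (m - 1) * (16 ^ (k + 1) * (4 * invSqSucc m))
          + (1 / (2 * 16 ^ k)) ^ 2 * (16 ^ (2 * k + 2)) ^ m * (16 ^ k * invSqSucc m) := by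
        gcongr
    _ = majorant (1 / (2 * 16 ^ k)) (16 ^ (2 * k + 2)) m := by
        rw [majorant, if_neg (by omega), hpow, hA]
        field_simp
        ring

theorem abs_le_majorant_of_rec {k : ℕ} {a : ℚ} (ha : |a| ≤ 1) (hc0 : c 0 = 1)
    (hrec : ∀ m : ℕ, 1 ≤ m →
      c m = (∑ ℓ ∈ Nat.antidiagonalTuple (k + 1) (m - 1), ∏ i, c (ℓ i))
        - a * ∑ j ∈ (Nat.antidiagonalTuple k m).filter (fun j => ∀ i, j i ≤ m - 1),
          ∏ i, c (j i))
    (m : ℕ) : |c m| ≤ majorant (1 / (2 * 16 ^ k)) (16 ^ (2 * k + 2)) m := by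
  induction m using Nat.strong_induction_on with
  | _ m ih =>
  rcases Nat.eq_zero_or_pos m with rfl | hm
  · simp [majorant, hc0, invSqSucc_zero]
  have hε₀ : (0 : ℚ) ≤ 1 / (2 * 16 ^ k) := by positivity
  have hε₁ := one_div_two_mul_sixteen_pow_le_one k
  have hA : (0 : ℚ) ≤ 16 ^ (2 * k + 2) := by positivity
  have h₁ := abs_sum_antidiagonalTuple_prod_le hε₀ hε₁ hA (k := k + 1) (m := m - 1)
    fun ℓ hℓ => ih ℓ (by omega)
  have h₂ := abs_sum_filter_antidiagonalTuple_prod_le hε₀ hε₁ hA (k := k) hm ih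
  rw [hrec m hm]
  refine (abs_sub _ _).trans ?_
  rw [abs_mul]
  exact (add_le_add h₁ ((mul_le_of_le_one_left (abs_nonneg _) ha).trans h₂)).trans
    (add_le_majorant k hm)

theorem abs_le_pow_of_rec {k : ℕ} {a : ℚ} (ha : |a| ≤ 1) (hc0 : c 0 = 1)
    (hrec : ∀ m : ℕ, 1 ≤ m →
      c m = (∑ ℓ ∈ Nat.antidiagonalTuple (k + 1) (m - 1), ∏ i, c (ℓ i))
        - a * ∑ j ∈ (Nat.antidiagonalTuple k m).filter (fun j => ∀ i, j i ≤ m - 1),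
          ∏ i, c (j i))
    (m : ℕ) : |c m| ≤ (16 ^ (2 * k + 2)) ^ m :=
  (abs_le_majorant_of_rec ha hc0 hrec m).trans <|
    majorant_le_pow (by positivity) (one_div_two_mul_sixteen_pow_le_one k) (by positivity) m

end Recursion

lemma summable_mul_pow_of_abs_le_pow {b : ℕ → ℝ} {C y : ℝ} (hb : ∀ m, |b m| ≤ C ^ m)
    (hy : C * |y| < 1) : Summable fun m => b m * y ^ m := by
  have hC : 0 ≤ C := (abs_nonneg _).trans (by simpa using hb 1)
  refine Summable.of_norm_bounded (summable_geometric_of_lt_one (by positivity) hy) fun m => ?_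
  rw [Real.norm_eq_abs, abs_mul, abs_pow, mul_pow]
  exact mul_le_mul_of_nonneg_right (hb m) (by positivity)

theorem statement4_general (n : ℕ) (c : ℕ → ℚ)
    (hc0 : c 0 = 1)
    (hcrec : ∀ m : ℕ, 1 ≤ m →
      c m = (∑ ℓ ∈ Finset.Nat.antidiagonalTuple (2 * n + 2) (m - 1), ∏ i, c (ℓ i))
        - 1 / (2 * (n : ℚ) + 1) *
          ∑ j ∈ (Finset.Nat.antidiagonalTuple (2 * n + 1) m).filter
              (fun j => ∀ i, j i ≤ m - 1), ∏ i, c (j i)) :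
    (∃ C : ℝ, 1 ≤ C ∧ ∀ m : ℕ, |(c m : ℝ)| ≤ C ^ m) ∧
    (∃ ρ : ℝ, 0 < ρ ∧ ∀ x : ℝ, |x| < ρ →
      Summable fun m : ℕ => (-1 : ℝ) ^ m * (c m : ℝ) / (2 * (n : ℝ) + 1) ^ m * x ^ m) := by
  set A : ℚ := 16 ^ (2 * (2 * n + 1) + 2)
  have hA : 1 ≤ A := one_le_pow₀ (by norm_num)
  have hcoef : |1 / (2 * (n : ℚ) + 1)| ≤ 1 := by
    rw [abs_of_pos (by positivity), div_le_one (by positivity)]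
    linarith [n.cast_nonneg (α := ℚ)]
  have hbound (m : ℕ) : |(c m : ℝ)| ≤ (A : ℝ) ^ m := by
    exact_mod_cast (show |c m| ≤ A ^ m from abs_le_pow_of_rec hcoef hc0 hcrec m)
  have hApos : (0 : ℝ) < A := by exact_mod_cast zero_lt_one.trans_le hA
  refine ⟨⟨A, by exact_mod_cast hA, hbound⟩, (A : ℝ)⁻¹, by positivity, fun x hx => ?_⟩
  have hy : (A : ℝ) * |-x / (2 * n + 1)| < 1 := by
    rw [abs_div, abs_neg, abs_of_pos (show (0 : ℝ) < 2 * n + 1 by positivity)]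
    calc (A : ℝ) * (|x| / (2 * n + 1)) ≤ A * |x| := by
          gcongr
          exact div_le_self (abs_nonneg _) (by linarith [n.cast_nonneg (α := ℝ)])
      _ < A * (A : ℝ)⁻¹ := by gcongr
      _ = 1 := mul_inv_cancel₀ hApos.ne'
  convert summable_mul_pow_of_abs_le_pow hbound hy using 2 with m
  ring

theorem statement4 (n : ℕ) (hn : 1 ≤ n) (c : ℕ → ℚ)
    (hc0 : c 0 = 1)
    (hcrec : ∀ m : ℕ, 1 ≤ m →
      c m = (∑ ℓ ∈ Finset.Nat.antidiagonalTuple (2 * n + 2) (m - 1), ∏ i, c (ℓ i))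
        - 1 / (2 * (n : ℚ) + 1) *
          ∑ j ∈ (Finset.Nat.antidiagonalTuple (2 * n + 1) m).filter
              (fun j => ∀ i, j i ≤ m - 1), ∏ i, c (j i)) :
    (∃ C : ℝ, 1 ≤ C ∧ ∀ m : ℕ, |(c m : ℝ)| ≤ C ^ m) ∧
    (∃ ρ : ℝ, 0 < ρ ∧ ∀ x : ℝ, |x| < ρ →
      Summable fun m : ℕ => (-1 : ℝ) ^ m * (c m : ℝ) / (2 * (n : ℝ) + 1) ^ m * x ^ m) :=
  statement4_general n c hc0 hcrec
end

section
/- In the inversion setup, assume (2n+2) · ‖b‖ · (r + |x_*|) < (2n+1) · a. Then: (i) |y(x) − y_*| ≥ (a/(2n+2)) · |x − x_*|^{2n+1} for every x ∈ [−r, r]; and (ii) the image y([−r, r]) contains the closed ball { Y ∈ ℝ : |Y − y_*| ≤ (a/(2n+2)) · (r − |x_*|)^{2n+1} }. -/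
theorem statement5 (n : ℕ) (hn : 1 ≤ n)
    (r a ystar xstar : ℝ) (hr : 0 < r) (ha : 0 < a)
    (hxstar : xstar ∈ Set.Icc (-r) r)
    (b : ℝ → ℝ) (hb : ContinuousOn b (Set.Icc (-r) r))
    (B : ℝ) (hB : IsGreatest ((fun x => |b x|) '' Set.Icc (-r) r) B)
    (y : ℝ → ℝ)
    (hy : ∀ x ∈ Set.Icc (-r) r,
      y x = ystar + a * (x - xstar) ^ (2 * n + 1) + b x * (x - xstar) ^ (2 * n + 2))
    (hcond : (2 * (n : ℝ) + 2) * B * (r + |xstar|) < (2 * (n : ℝ) + 1) * a) :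
    (∀ x ∈ Set.Icc (-r) r,
      a / (2 * (n : ℝ) + 2) * |x - xstar| ^ (2 * n + 1) ≤ |y x - ystar|) ∧
    (∀ Y : ℝ, |Y - ystar| ≤ a / (2 * (n : ℝ) + 2) * (r - |xstar|) ^ (2 * n + 1) →
      ∃ x ∈ Set.Icc (-r) r, y x = Y) := by
  obtain ⟨x0, hx0, hx0B⟩ := hB.1
  have hB0 : 0 ≤ B := by rw [← hx0B]; exact abs_nonneg _
  have hBle : ∀ x ∈ Set.Icc (-r) r, |b x| ≤ B := fun x hx => hB.2 ⟨x, hx, rfl⟩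
  have hNpos : (0:ℝ) < 2 * (n:ℝ) + 2 := by positivity
  have key : ∀ x ∈ Set.Icc (-r) r, a / (2*(n:ℝ)+2) ≤ a + b x * (x - xstar) := by
    intro x hx
    have hxr : |x| ≤ r := abs_le.mpr ⟨hx.1, hx.2⟩
    have h1 : |x - xstar| ≤ r + |xstar| := by
      have h0 : |x - xstar| ≤ |x| + |xstar| := abs_sub x xstar
      linarith
    have h2 : |b x * (x - xstar)| ≤ B * (r + |xstar|) := by
      rw [abs_mul]; exact mul_le_mul (hBle x hx) h1 (abs_nonneg _) hB0
    have h3 := neg_abs_le (b x * (x - xstar))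
    rw [div_le_iff₀ hNpos]
    nlinarith
  have hyfac : ∀ x ∈ Set.Icc (-r) r,
      y x - ystar = (x - xstar)^(2*n+1) * (a + b x * (x - xstar)) := by
    intro x hx; rw [hy x hx]; ring
  have part1 : ∀ x ∈ Set.Icc (-r) r,
      a / (2*(n:ℝ)+2) * |x - xstar| ^ (2*n+1) ≤ |y x - ystar| := by
    intro x hx
    rw [hyfac x hx, abs_mul, abs_pow]
    have hk := key x hx
    have hpos : 0 ≤ a + b x * (x - xstar) := le_trans (by positivity) hk
    rw [abs_of_nonneg hpos, mul_comm]
    exact mul_le_mul_of_nonneg_left hk (pow_nonneg (abs_nonneg _) _)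
  refine ⟨part1, ?_⟩
  intro Y hY
  have hx_r : |xstar| ≤ r := abs_le.mpr ⟨hxstar.1, hxstar.2⟩
  set s := r - |xstar| with hs
  clear_value s
  have hs0 : 0 ≤ s := by rw [hs]; linarith
  have hxp : xstar + s ∈ Set.Icc (-r) r := by
    constructor
    · have := hxstar.1; linarith
    · have := le_abs_self xstar; simp only [hs]; linarith
  have hxm : xstar - s ∈ Set.Icc (-r) r := by
    constructor
    · have := neg_abs_le xstar; simp only [hs]; linarith
    · have := hxstar.2; linarith
  have hcont : ContinuousOn y (Set.Icc (-r) r) := by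
    have hc : ContinuousOn
        (fun x => ystar + a * (x - xstar) ^ (2*n+1) + b x * (x - xstar) ^ (2*n+2))
        (Set.Icc (-r) r) := by
      exact ((continuousOn_const.add (continuousOn_const.mul
        ((continuousOn_id.sub continuousOn_const).pow _))).add
        (hb.mul ((continuousOn_id.sub continuousOn_const).pow _)))
    exact hc.congr (fun x hx => hy x hx)
  have hps : 0 ≤ s ^ (2*n+1) := pow_nonneg hs0 _
  have hfacp := key _ hxp
  have hfacm := key _ hxm
  have efp := hyfac _ hxp
  have efm := hyfac _ hxm
  rw [add_sub_cancel_left] at efp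
  have hms : xstar - s - xstar = -s := by ring
  rw [hms] at efm
  have hoddpow : (-s)^(2*n+1) = -(s^(2*n+1)) := Odd.neg_pow ⟨n, by ring⟩ s
  rw [hoddpow] at efm
  rw [add_sub_cancel_left] at hfacp
  rw [hms] at hfacm
  have hmulp : a / (2*(n:ℝ)+2) * s^(2*n+1) ≤ s^(2*n+1) * (a + b (xstar+s) * s) := by
    rw [mul_comm]
    exact mul_le_mul_of_nonneg_left hfacp hps
  have hmulm : a / (2*(n:ℝ)+2) * s^(2*n+1) ≤ s^(2*n+1) * (a + b (xstar-s) * (-s)) := by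
    rw [mul_comm]
    exact mul_le_mul_of_nonneg_left hfacm hps
  have hYabs := abs_le.mp hY
  have hyple : ystar + a/(2*(n:ℝ)+2) * s^(2*n+1) ≤ y (xstar + s) := by linarith
  have hymle : y (xstar - s) ≤ ystar - a/(2*(n:ℝ)+2) * s^(2*n+1) := by linarith
  have hmle : xstar - s ≤ xstar + s := by linarith
  have hsub : Set.Icc (xstar - s) (xstar + s) ⊆ Set.Icc (-r) r :=
    Set.Icc_subset_Icc hxm.1 hxp.2
  have hIVT := intermediate_value_Icc hmle (hcont.mono hsub)
  have hYmem : Y ∈ Set.Icc (y (xstar - s)) (y (xstar + s)) :=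
    ⟨by linarith, by linarith⟩
  obtain ⟨x, hx, hxY⟩ := hIVT hYmem
  exact ⟨x, hsub hx, hxY⟩
end

section
/- For every integer n ≥ 1 there exist constants R_n > 0 and M_n > 0, depending only on n, with the following property. In the inversion setup, if (2n+2) · ‖b‖ · (r + |x_*|) < (2n+1) · a and ‖b‖ · (r + |x_*|) < a · R_n / 4, then for every x ∈ [−r, r]: | (x − x_*) − ((y(x) − y_*)/a)^{1/(2n+1)} | ≤ (4 M_n ‖b‖ / (a R_n)) · |(y(x) − y_*)/a|^{2/(2n+1)}. -/
open Real

lemma aux_deriv_bound {m : ℕ} (hm : 3 ≤ m) {c : ℝ} (hc : |c| ≤ 1/4) :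
    |1 - (1 + c) ^ ((1 : ℝ)/m)| ≤ |c| := by
  set p : ℝ := (1 : ℝ)/m with hp
  have hm0 : (0:ℝ) < m := by positivity
  have hp0 : 0 < p := by positivity
  have hp3 : p ≤ 1/3 := by
    rw [hp]
    apply div_le_div_of_nonneg_left (by norm_num) (by norm_num)
    exact_mod_cast hm
  set s : Set ℝ := Set.Icc (-(1/4) : ℝ) (1/4) with hs
  have hpos : ∀ t ∈ s, (3:ℝ)/4 ≤ 1 + t := by
    intro t ht; simp only [hs, Set.mem_Icc] at ht; linarith [ht.1]
  have hf : ∀ t ∈ s, HasDerivWithinAt (fun t : ℝ => (1 + t) ^ p)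
      (1 * p * (1 + t) ^ (p - 1)) s t := by
    intro t ht
    have h1 : HasDerivAt (fun t : ℝ => 1 + t) 1 t := by
      simpa using (hasDerivAt_id t).const_add (1 : ℝ)
    exact (h1.rpow_const (Or.inl (by have := hpos t ht; linarith))).hasDerivWithinAt
  have hbound : ∀ t ∈ s, ‖1 * p * (1 + t) ^ (p - 1)‖ ≤ 1 := by
    intro t ht
    have h34 : (3:ℝ)/4 ≤ 1 + t := hpos t ht
    have h1 : (1 + t) ^ (p - 1) ≤ ((3:ℝ)/4) ^ (p - 1) :=
      Real.rpow_le_rpow_of_nonpos (by norm_num) h34 (by linarith)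
    have h2 : ((3:ℝ)/4) ^ (p - 1) ≤ ((3:ℝ)/4) ^ (-1 : ℝ) :=
      Real.rpow_le_rpow_of_exponent_ge (by norm_num) (by norm_num) (by linarith)
    have h3 : ((3:ℝ)/4) ^ (-1 : ℝ) = 4/3 := by
      rw [Real.rpow_neg_one]; norm_num
    have h4 : (0:ℝ) < (1 + t) ^ (p - 1) := Real.rpow_pos_of_pos (by linarith) _
    rw [Real.norm_eq_abs, abs_of_pos (by positivity)]
    nlinarith
  have := Convex.norm_image_sub_le_of_norm_hasDerivWithin_le hf hbound
    (convex_Icc _ _) (Set.mem_Icc.mpr (by norm_num) : (0:ℝ) ∈ s)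
    (Set.mem_Icc.mpr (abs_le.mp hc))
  simp only [Real.norm_eq_abs, add_zero, Real.one_rpow, sub_zero, one_mul] at this
  calc |1 - (1 + c) ^ p| = |(1 + c) ^ p - 1| := abs_sub_comm _ _
    _ ≤ |c| := this

lemma aux_oddRoot_eq {m : ℕ} (hm : m ≠ 0) (hodd : Odd m) (u w : ℝ) (hw : 0 < w) :
    Real.sign (u ^ m * w) * |u ^ m * w| ^ ((1 : ℝ)/m) = u * w ^ ((1 : ℝ)/m) := by
  have habs : |u ^ m * w| ^ ((1 : ℝ)/m) = |u| * w ^ ((1 : ℝ)/m) := by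
    rw [abs_mul, abs_pow, abs_of_pos hw,
      Real.mul_rpow (by positivity) hw.le, ← Real.rpow_natCast |u| m,
      ← Real.rpow_mul (abs_nonneg u), mul_one_div, div_self (by exact_mod_cast hm),
      Real.rpow_one]
  rw [habs]
  rcases lt_trichotomy u 0 with hu | hu | hu
  · have : u ^ m * w < 0 := mul_neg_of_neg_of_pos (hodd.pow_neg hu) hw
    rw [Real.sign_of_neg this, abs_of_neg hu]; ring
  · simp [hu, zero_pow hm]
  · have : 0 < u ^ m * w := mul_pos (pow_pos hu m) hw
    rw [Real.sign_of_pos this, abs_of_pos hu]; ring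

noncomputable def oddRoot (m : ℕ) (t : ℝ) : ℝ := Real.sign t * |t| ^ ((1 : ℝ) / m)

theorem statement6 (n : ℕ) (hn : 1 ≤ n) :
    ∃ R : ℝ, 0 < R ∧ ∃ M : ℝ, 0 < M ∧
      ∀ (r a ystar xstar : ℝ) (b : ℝ → ℝ) (B : ℝ) (y : ℝ → ℝ),
        0 < r → 0 < a → xstar ∈ Set.Icc (-r) r →
        ContinuousOn b (Set.Icc (-r) r) →
        IsGreatest ((fun x => |b x|) '' Set.Icc (-r) r) B →
        (∀ x ∈ Set.Icc (-r) r,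
          y x = ystar + a * (x - xstar) ^ (2 * n + 1) + b x * (x - xstar) ^ (2 * n + 2)) →
        (2 * (n : ℝ) + 2) * B * (r + |xstar|) < (2 * (n : ℝ) + 1) * a →
        B * (r + |xstar|) < a * R / 4 →
        ∀ x ∈ Set.Icc (-r) r,
          |(x - xstar) - oddRoot (2 * n + 1) ((y x - ystar) / a)| ≤
            4 * M * B / (a * R) * |(y x - ystar) / a| ^ ((2 : ℝ) / (2 * (n : ℝ) + 1)) := by
  refine ⟨1, one_pos, 1, one_pos, ?_⟩
  intro r a ystar xstar b B y hr ha hxstar hbcont hB hy _ hR x hx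
  set m : ℕ := 2 * n + 1 with hmdef
  have hm3 : 3 ≤ m := by omega
  have hmR : (m : ℝ) = 2 * (n : ℝ) + 1 := by push_cast [hmdef]; ring
  set u : ℝ := x - xstar with hu
  have hxr : |x| ≤ r := abs_le.mpr ⟨hx.1, hx.2⟩
  have hule : |u| ≤ r + |xstar| := by
    calc |u| ≤ |x| + |xstar| := abs_sub _ _
      _ ≤ r + |xstar| := by linarith
  have hbx : |b x| ≤ B := hB.2 ⟨x, hx, rfl⟩
  have hB0 : 0 ≤ B := le_trans (abs_nonneg _) hbx
  set c : ℝ := b x * u / a with hc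
  have hcle : |c| ≤ 1/4 := by
    have h1 : |c| = |b x| * |u| / a := by
      rw [hc, abs_div, abs_mul, abs_of_pos ha]
    have h2 : |b x| * |u| ≤ B * (r + |xstar|) :=
      mul_le_mul hbx hule (abs_nonneg _) hB0
    rw [h1, div_le_iff₀ ha]
    nlinarith
  have hw : (0:ℝ) < 1 + c := by
    have := abs_le.mp hcle; linarith [this.1]
  have hyx : (y x - ystar) / a = u ^ m * (1 + c) := by
    rw [hy x hx, hc, hu]
    have hm1 : 2 * n + 2 = m + 1 := by omega
    rw [hm1]
    field_simp
    ring
  rw [hyx, oddRoot, aux_oddRoot_eq (by omega) (by exact ⟨n, by omega⟩) u (1 + c) hw]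
  have hm0 : (0:ℝ) < m := by positivity
  have h2 := aux_deriv_bound hm3 hcle
  have h5 : |c| ≤ B * |u| / a := by
    have h3 : |c| = |b x| * |u| / a := by rw [hc, abs_div, abs_mul, abs_of_pos ha]
    rw [h3]
    gcongr
  have key1 : |u - u * (1 + c) ^ ((1:ℝ)/m)| ≤ B * |u|^2 / a := by
    have h1 : |u - u * (1 + c) ^ ((1:ℝ)/m)| = |u| * |1 - (1 + c) ^ ((1:ℝ)/m)| := by
      rw [← abs_mul]; congr 1; ring
    rw [h1]
    calc |u| * |1 - (1 + c) ^ ((1:ℝ)/m)| ≤ |u| * (B * |u| / a) :=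
          mul_le_mul_of_nonneg_left (h2.trans h5) (abs_nonneg u)
      _ = B * |u|^2 / a := by ring
  have hexp : (2:ℝ) / (2 * (n : ℝ) + 1) = 2 / (m : ℝ) := by rw [hmR]
  rw [hexp]
  have habs2 : |u ^ m * (1 + c)| ^ ((2:ℝ)/m) = |u|^2 * (1 + c) ^ ((2:ℝ)/m) := by
    rw [abs_mul, abs_pow, abs_of_pos hw,
      Real.mul_rpow (by positivity) hw.le, ← Real.rpow_natCast |u| m,
      ← Real.rpow_mul (abs_nonneg u)]
    congr 1
    · rw [show (m : ℝ) * (2/(m:ℝ)) = 2 by field_simp, ← Real.rpow_natCast |u| 2]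
      norm_num
  rw [habs2]
  set q : ℝ := (1 + c) ^ ((2:ℝ)/m) with hqdef
  have hq : 1/4 ≤ q := by
    have h34 : (3:ℝ)/4 ≤ 1 + c := by have := abs_le.mp hcle; linarith [this.1]
    have ha1 : ((3:ℝ)/4) ^ ((2:ℝ)/m) ≤ q :=
      Real.rpow_le_rpow (by norm_num) h34 (by positivity)
    have ha2 : ((3:ℝ)/4) ^ (1:ℝ) ≤ ((3:ℝ)/4) ^ ((2:ℝ)/m) := by
      apply Real.rpow_le_rpow_of_exponent_ge (by norm_num) (by norm_num)
      rw [div_le_one hm0]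
      have : (3:ℝ) ≤ (m:ℝ) := by exact_mod_cast hm3
      linarith
    rw [Real.rpow_one] at ha2
    linarith
  have hfin : B * |u|^2 ≤ 4 * 1 * B * (|u|^2 * q) := by
    nlinarith [mul_nonneg (mul_nonneg hB0 (sq_nonneg |u|)) (by linarith : (0:ℝ) ≤ 4*q - 1)]
  calc |u - u * (1 + c) ^ ((1:ℝ)/m)| ≤ B * |u|^2 / a := key1
    _ ≤ (4 * 1 * B * (|u|^2 * q)) / a := by gcongr
    _ = 4 * 1 * B / (a * 1) * (|u|^2 * q) := by ring
end

section
/- Let n ≥ 1 be an integer, let 0 < ε < (2n)!, and let w₀ : ℝ → ℝ be (2n+1)-times continuously differentiable with sup_{x∈ℝ} |w₀^{(k)}(x) − w̄₀^{(k)}(x)| < ε for every k = 0, 1, …, 2n+1, where w̄₀(x) := −x + x^{2n+1}/(2n+1). Then there exists exactly one point x̊ ∈ ℝ with w₀^{(2n)}(x̊) = 0, and it satisfies |x̊| ≤ ε/((2n)! − ε). -/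
/-!
The (2n)-th derivative g of w₀ is ε-close to x ↦ (2n)!·x, and g' is ε-close to the
constant (2n)! > ε. Hence g' > 0, so g has at most one zero, while
g(-ε/(2n)!) ≤ 0 ≤ g(ε/(2n)!), so by the intermediate value theorem it has a zero in
[-ε/(2n)!, ε/(2n)!] ⊆ [-ε/((2n)! - ε), ε/((2n)! - ε)].
-/

open Nat

theorem iteratedDeriv_neg_add_pow_div {𝕜 : Type*} [NontriviallyNormedField 𝕜] {k : ℕ}
    (hk : 2 ≤ k) (p : ℕ) (c x : 𝕜) :
    iteratedDeriv k (fun x : 𝕜 => -x + x ^ p / c) x = p.descFactorial k * x ^ (p - k) / c := by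
  rw [iteratedDeriv_fun_add (by fun_prop) (by fun_prop), iteratedDeriv_fun_neg,
    iteratedDeriv_fun_id, iteratedDeriv_div_const, iteratedDeriv_pow]
  simp [show k ≠ 0 by omega, show k ≠ 1 by omega]

theorem iteratedDeriv_two_mul_neg_add_pow_div {n : ℕ} (hn : 1 ≤ n) (x : ℝ) :
    iteratedDeriv (2 * n) (fun x : ℝ => -x + x ^ (2 * n + 1) / (2 * (n : ℝ) + 1)) x
      = (2 * n)! * x := by
  rw [iteratedDeriv_neg_add_pow_div (by omega), show 2 * n + 1 - 2 * n = 1 by omega, pow_one]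
  have hdesc : (2 * n + 1).descFactorial (2 * n) = (2 * n + 1)! := by
    simpa using Nat.factorial_mul_descFactorial (show 2 * n ≤ 2 * n + 1 by omega)
  rw [hdesc, Nat.factorial_succ]
  push_cast
  field_simp

theorem iteratedDeriv_two_mul_add_one_neg_add_pow_div {n : ℕ} (hn : 1 ≤ n) (x : ℝ) :
    iteratedDeriv (2 * n + 1) (fun x : ℝ => -x + x ^ (2 * n + 1) / (2 * (n : ℝ) + 1)) x
      = (2 * n)! := by
  rw [iteratedDeriv_neg_add_pow_div (by omega), Nat.sub_self, pow_zero, Nat.descFactorial_self,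
    Nat.factorial_succ]
  push_cast
  field_simp

theorem exists_zero_abs_le_of_abs_sub_mul_lt {g : ℝ → ℝ} (hg : Continuous g) {K ε : ℝ}
    (hK : 0 < K) (hclose : ∀ x, |g x - K * x| < ε) : ∃ x₀, g x₀ = 0 ∧ |x₀| ≤ ε / K := by
  have hε : 0 < ε := (abs_nonneg _).trans_lt (hclose 0)
  have hKM : K * (ε / K) = ε := mul_div_cancel₀ ε hK.ne'
  have hneg : g (-(ε / K)) ≤ 0 := by
    have := (abs_sub_lt_iff.mp (hclose (-(ε / K)))).1
    linarith
  have hpos : 0 ≤ g (ε / K) := by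
    have := (abs_sub_lt_iff.mp (hclose (ε / K))).2
    linarith
  have hle : -(ε / K) ≤ ε / K := by linarith [div_pos hε hK]
  obtain ⟨x₀, hx₀, hgx₀⟩ := intermediate_value_Icc hle hg.continuousOn ⟨hneg, hpos⟩
  exact ⟨x₀, hgx₀, abs_le.mpr hx₀⟩

theorem strictMono_of_abs_deriv_sub_lt {g : ℝ → ℝ} {K ε : ℝ} (hεK : ε ≤ K)
    (hderiv : ∀ x, |deriv g x - K| < ε) : StrictMono g :=
  strictMono_of_deriv_pos fun x => by linarith [(abs_sub_lt_iff.mp (hderiv x)).2]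

theorem statement7 (n : ℕ) (hn : 1 ≤ n) (ε : ℝ)
    (hε0 : 0 < ε) (hε1 : ε < (Nat.factorial (2 * n) : ℝ))
    (w₀ : ℝ → ℝ) (hw : ContDiff ℝ (2 * n + 1) w₀)
    (hclose : ∀ k ≤ 2 * n + 1, ∀ x : ℝ,
      |iteratedDeriv k w₀ x -
        iteratedDeriv k (fun x : ℝ => -x + x ^ (2 * n + 1) / (2 * (n : ℝ) + 1)) x| < ε) :
    ∃ x₀ : ℝ, iteratedDeriv (2 * n) w₀ x₀ = 0 ∧
      |x₀| ≤ ε / ((Nat.factorial (2 * n) : ℝ) - ε) ∧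
      ∀ x : ℝ, iteratedDeriv (2 * n) w₀ x = 0 → x = x₀ := by
  have hg : Continuous (iteratedDeriv (2 * n) w₀) :=
    hw.continuous_iteratedDeriv _ (by exact_mod_cast (2 * n).le_succ)
  have hvalue : ∀ x, |iteratedDeriv (2 * n) w₀ x - (2 * n)! * x| < ε := fun x => by
    simpa [iteratedDeriv_two_mul_neg_add_pow_div hn] using hclose (2 * n) (by omega) x
  have hderiv : ∀ x, |deriv (iteratedDeriv (2 * n) w₀) x - (2 * n)!| < ε := fun x => by
    simpa [← iteratedDeriv_succ, iteratedDeriv_two_mul_add_one_neg_add_pow_div hn]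
      using hclose (2 * n + 1) le_rfl x
  have hmono := strictMono_of_abs_deriv_sub_lt hε1.le hderiv
  obtain ⟨x₀, hzero, hx₀⟩ := exists_zero_abs_le_of_abs_sub_mul_lt hg (by positivity) hvalue
  refine ⟨x₀, hzero, hx₀.trans ?_, fun x hx => hmono.injective (hx.trans hzero.symm)⟩
  exact div_le_div_of_nonneg_left hε0.le (sub_pos.mpr hε1) (sub_le_self _ hε0.le)
end

section
/- Let n ≥ 1 be an integer, let a < b be reals, let J be an open interval containing [a,b], and let f : ℝ → ℝ be 2n-times differentiable on J with f^{(2n)}(x) > 0 for every x ∈ [a,b]. If f(x) ≥ 0 for every x ∈ [a,b] and f(a) > 0 and f(b) > 0, then the set { x ∈ [a,b] : f(x) = 0 } has at most n elements. -/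
/-!
If `f ≥ 0` vanishes at `n + 1` points of `[a, b]`, these lie in `(a, b)` and are local minima,
hence zeros of `f'`; together with the Rolle points between consecutive ones, `f'` has
`2n + 1` zeros. Applying Rolle's theorem `2n - 1` more times yields a zero of `f^{(2n)}`.
-/

open Set

theorem Set.encard_le_coe_of_forall_finset_card_le {α : Type*} {S : Set α} {k : ℕ}
    (h : ∀ u : Finset α, ↑u ⊆ S → u.card ≤ k) : S.encard ≤ k := by
  by_contra hS
  obtain ⟨t, htS, htk⟩ := exists_subset_encard_eq (Order.add_one_le_of_lt (not_le.mp hS))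
  have ht : t.Finite := finite_of_encard_eq_coe (k := k + 1) (by exact_mod_cast htk)
  have hcard : (ht.toFinset.card : ℕ∞) ≤ k := by exact_mod_cast h ht.toFinset (by simpa using htS)
  rw [← ht.encard_eq_coe_toFinset_card, htk] at hcard
  exact absurd hcard (by norm_cast; omega)

theorem deriv_eq_zero_of_nonneg_of_eq_zero {f : ℝ → ℝ} {s : Set ℝ} {x : ℝ} (hs : s ∈ nhds x)
    (hf : ∀ y ∈ s, 0 ≤ f y) (hfx : f x = 0) : deriv f x = 0 :=
  IsLocalMin.deriv_eq_zero (Filter.mem_of_superset hs fun y hy => (hfx.symm ▸ hf y hy : f x ≤ f y))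

section Rolle

variable {s : Set ℝ} {g : ℝ → ℝ} {u : Finset ℝ}

theorem exists_finset_deriv_eq_zero_disjoint (hs : s.OrdConnected) (hg : ContinuousOn g s)
    (hus : ↑u ⊆ s) (hu : ∀ x ∈ u, g x = 0) :
    ∃ v : Finset ℝ, Disjoint u v ∧ ↑v ⊆ s ∧ (∀ x ∈ v, deriv g x = 0) ∧ u.card ≤ v.card + 1 := by
  have rolle : ∀ p : ℝ × ℝ, ∃ c, p.1 ∈ u → p.2 ∈ u → p.1 < p.2 →
      c ∈ Ioo p.1 p.2 ∧ deriv g c = 0 := fun ⟨x, y⟩ => by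
    by_cases h : x ∈ u ∧ y ∈ u ∧ x < y
    · obtain ⟨hx, hy, hxy⟩ := h
      have hIcc : Icc x y ⊆ s := hs.out (hus hx) (hus hy)
      obtain ⟨c, hc, hc'⟩ := exists_deriv_eq_zero hxy (hg.mono hIcc) (by rw [hu x hx, hu y hy])
      exact ⟨c, fun _ _ _ => ⟨hc, hc'⟩⟩
    · exact ⟨0, fun hx hy hxy => absurd ⟨hx, hy, hxy⟩ h⟩
  choose c hc using rolle
  set t := ((u ×ˢ u).filter fun p => p.1 < p.2).image c
  have ht : ∀ z ∈ t, z ∈ s ∧ deriv g z = 0 := by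
    simp only [t, Finset.forall_mem_image, Finset.mem_filter, Finset.mem_product]
    rintro ⟨x, y⟩ ⟨⟨hx, hy⟩, hxy⟩
    obtain ⟨hcxy, hc0⟩ := hc _ hx hy hxy
    exact ⟨hs.out (hus hx) (hus hy) (Ioo_subset_Icc_self hcxy), hc0⟩
  refine ⟨t \ u, Finset.disjoint_sdiff, fun z hz => (ht z (Finset.mem_sdiff.1 hz).1).1,
    fun z hz => (ht z (Finset.mem_sdiff.1 hz).1).2, Finset.card_le_sdiff_of_interleaved ?_⟩
  intro x hx y hy hxy _
  exact ⟨c (x, y), Finset.mem_image_of_mem _ (by simp [hx, hy, hxy]), (hc (x, y) hx hy hxy).1⟩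

theorem exists_finset_deriv_eq_zero_two_mul_card_le (hs : s.OrdConnected)
    (hg : ContinuousOn g s) (hus : ↑u ⊆ s) (hu : ∀ x ∈ u, g x = 0)
    (hu' : ∀ x ∈ u, deriv g x = 0) :
    ∃ v : Finset ℝ, ↑v ⊆ s ∧ (∀ x ∈ v, deriv g x = 0) ∧ 2 * u.card ≤ v.card + 1 := by
  obtain ⟨v, huv, hvs, hv, hcard⟩ := exists_finset_deriv_eq_zero_disjoint hs hg hus hu
  refine ⟨u ∪ v, by simpa using ⟨hus, hvs⟩, ?_, ?_⟩
  · simp only [Finset.mem_union]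
    rintro x (hx | hx)
    exacts [hu' x hx, hv x hx]
  · rw [Finset.card_union_of_disjoint huv]
    omega

theorem exists_finset_iteratedDeriv_eq_zero (hs : s.OrdConnected) (m : ℕ)
    (hg : ∀ i < m, ContinuousOn (iteratedDeriv i g) s) (hus : ↑u ⊆ s) (hu : ∀ x ∈ u, g x = 0) :
    ∃ w : Finset ℝ, ↑w ⊆ s ∧ (∀ x ∈ w, iteratedDeriv m g x = 0) ∧ u.card ≤ w.card + m := by
  induction m with
  | zero => exact ⟨u, hus, by simpa using hu, le_rfl⟩
  | succ m ih =>
    obtain ⟨w, hws, hw, hcard⟩ := ih fun i hi => hg i (by omega)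
    obtain ⟨v, -, hvs, hv, hcard'⟩ :=
      exists_finset_deriv_eq_zero_disjoint hs (hg m (by omega)) hws hw
    exact ⟨v, hvs, by simpa only [iteratedDeriv_succ] using hv, by omega⟩

end Rolle

theorem statement9_general (n : ℕ) (hn : 1 ≤ n) (a b : ℝ)
    (J : Set ℝ) (hJopen : IsOpen J) (hJ : Set.Icc a b ⊆ J)
    (f : ℝ → ℝ)
    (hdiff : ∀ i < 2 * n, DifferentiableOn ℝ (iteratedDerivWithin i f J) J)
    (hpos : ∀ x ∈ Set.Icc a b, 0 < iteratedDerivWithin (2 * n) f J x)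
    (hnonneg : ∀ x ∈ Set.Icc a b, 0 ≤ f x)
    (hfa : 0 < f a) (hfb : 0 < f b) :
    {x | x ∈ Set.Icc a b ∧ f x = 0}.encard ≤ (n : ℕ∞) := by
  have hwithin : ∀ i, EqOn (iteratedDerivWithin i f J) (iteratedDeriv i f) J :=
    fun i x hx => iteratedDerivWithin_of_isOpen hJopen hx
  have hcont : ∀ i < 2 * n, ContinuousOn (iteratedDeriv i f) (Icc a b) := fun i hi =>
    ((hdiff i hi).congr (hwithin i).symm).continuousOn.mono hJ
  have hcrit : ∀ x ∈ Icc a b, f x = 0 → deriv f x = 0 := by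
    rintro x ⟨hax, hxb⟩ hfx
    refine deriv_eq_zero_of_nonneg_of_eq_zero (Icc_mem_nhds ?_ ?_) hnonneg hfx
    · exact hax.lt_of_ne (by rintro rfl; linarith)
    · exact hxb.lt_of_ne (by rintro rfl; linarith)
  refine encard_le_coe_of_forall_finset_card_le fun u hu => ?_
  obtain ⟨v, hvs, hv, hcard⟩ := exists_finset_deriv_eq_zero_two_mul_card_le ordConnected_Icc
    (iteratedDeriv_zero (f := f) ▸ hcont 0 (by omega)) (fun x hx => (hu hx).1)
    (fun x hx => (hu hx).2) (fun x hx => hcrit x (hu hx).1 (hu hx).2)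
  obtain ⟨w, hws, hw, hcard'⟩ := exists_finset_iteratedDeriv_eq_zero ordConnected_Icc (2 * n - 1)
    (fun i hi => by rw [← iteratedDeriv_succ']; exact hcont (i + 1) (by omega)) hvs hv
  have hw_empty : w = ∅ := Finset.eq_empty_of_forall_notMem fun x hx => by
    have hx' := hpos x (hws hx)
    rw [hwithin _ (hJ (hws hx)), ← Nat.sub_add_cancel (by omega : 1 ≤ 2 * n), iteratedDeriv_succ',
      hw x hx] at hx'
    exact lt_irrefl 0 hx'
  rw [hw_empty, Finset.card_empty] at hcard'
  omega

theorem statement9 (n : ℕ) (hn : 1 ≤ n) (a b : ℝ) (hab : a < b)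
    (J : Set ℝ) (hJopen : IsOpen J) (hJord : J.OrdConnected) (hJ : Set.Icc a b ⊆ J)
    (f : ℝ → ℝ)
    (hdiff : ∀ i < 2 * n, DifferentiableOn ℝ (iteratedDerivWithin i f J) J)
    (hpos : ∀ x ∈ Set.Icc a b, 0 < iteratedDerivWithin (2 * n) f J x)
    (hnonneg : ∀ x ∈ Set.Icc a b, 0 ≤ f x)
    (hfa : 0 < f a) (hfb : 0 < f b) :
    {x | x ∈ Set.Icc a b ∧ f x = 0}.encard ≤ (n : ℕ∞) :=
  statement9_general n hn a b J hJopen hJ f hdiff hpos hnonneg hfa hfb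
end

section
/- Let n ≥ 1 be an integer, let a ≥ 1/(2(2n+1)), let x_* ∈ ℝ and b ∈ ℝ with 0 < b − x_* ≤ 1. Let h : ℝ → ℝ be continuous on [x_*, b] with |h(x)| ≤ 1/4 for all x ∈ [x_*, b], and let g : ℝ → ℝ be differentiable on [x_*, b] with g'(x) = (2n+1)·a·(x − x_*)^{2n} + h(x)·(x − x_*)^{2n+1} for all x ∈ [x_*, b]. Then for all x₁, x₂ with x_* ≤ x₁ ≤ x₂ ≤ b, one has g(x₂) − g(x₁) ≥ (x₂ − x₁)^{2n+1} / (4(2n+1)). -/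
/-!
The comparison function `(x - x⋆)^(2n+1) / (4(2n+1))` has derivative `(x - x⋆)^(2n) / 4`, and on
`[x⋆, b] ⊆ [x⋆, x⋆ + 1]` the derivative of `g` dominates it because the perturbation
`h(x)(x - x⋆)^(2n+1)` costs at most `(x - x⋆)^(2n) / 4` while the main term contributes at least
`(x - x⋆)^(2n) / 2`. So `g` grows at least as fast as the comparison function, and the latter grows
at least as fast as `(x₂ - x₁)^(2n+1) / (4(2n+1))` by superadditivity of `t ↦ t^(2n+1)` on `[0, ∞)`.
-/

open Set

theorem sub_le_sub_of_hasDerivWithinAt_le {f g f' g' : ℝ → ℝ} {s : Set ℝ} (hs : Convex ℝ s)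
    (hf : ∀ x ∈ s, HasDerivWithinAt f (f' x) s x) (hg : ∀ x ∈ s, HasDerivWithinAt g (g' x) s x)
    (hle : ∀ x ∈ s, f' x ≤ g' x) {x y : ℝ} (hx : x ∈ s) (hy : y ∈ s) (hxy : x ≤ y) :
    f y - f x ≤ g y - g x := by
  have hmono : MonotoneOn (fun z => g z - f z) s := by
    refine monotoneOn_of_hasDerivWithinAt_nonneg hs
      (fun z hz => ((hg z hz).sub (hf z hz)).continuousWithinAt)
      (fun z hz => ((hg z (interior_subset hz)).sub (hf z (interior_subset hz))).mono
        interior_subset) ?_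
    exact fun z hz => sub_nonneg.2 (hle z (interior_subset hz))
  linarith [hmono hx hy hxy]

theorem sub_pow_le_sub_pow_sub_sub_pow {x₀ x₁ x₂ : ℝ} {m : ℕ} (hm : m ≠ 0)
    (h₀₁ : x₀ ≤ x₁) (h₁₂ : x₁ ≤ x₂) :
    (x₂ - x₁) ^ m ≤ (x₂ - x₀) ^ m - (x₁ - x₀) ^ m := by
  have := pow_add_pow_le (sub_nonneg.2 h₁₂) (sub_nonneg.2 h₀₁) hm
  rw [sub_add_sub_cancel] at this
  linarith

theorem sub_mul_pow_le_mul_pow_add_mul_pow_succ {t e A B : ℝ} (k : ℕ) (ht₀ : 0 ≤ t)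
    (ht₁ : t ≤ 1) (he : |e| ≤ B) :
    (A - B) * t ^ k ≤ A * t ^ k + e * t ^ (k + 1) := by
  have hpow : t ^ (k + 1) ≤ t ^ k := pow_le_pow_of_le_one ht₀ ht₁ k.le_succ
  have hB : 0 ≤ B := (abs_nonneg e).trans he
  nlinarith [neg_abs_le e, pow_nonneg ht₀ k, pow_nonneg ht₀ (k + 1)]

theorem statement10_general (n : ℕ) (a xstar b : ℝ)
    (ha : 1 / (2 * (2 * (n : ℝ) + 1)) ≤ a)
    (hb1 : b - xstar ≤ 1)
    (h g : ℝ → ℝ)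
    (hhb : ∀ x ∈ Set.Icc xstar b, |h x| ≤ 1 / 4)
    (hg : ∀ x ∈ Set.Icc xstar b,
      HasDerivWithinAt g
        ((2 * (n : ℝ) + 1) * a * (x - xstar) ^ (2 * n) + h x * (x - xstar) ^ (2 * n + 1))
        (Set.Icc xstar b) x) :
    ∀ x₁ ∈ Set.Icc xstar b, ∀ x₂ ∈ Set.Icc xstar b, x₁ ≤ x₂ →
      (x₂ - x₁) ^ (2 * n + 1) / (4 * (2 * (n : ℝ) + 1)) ≤ g x₂ - g x₁ := by
  intro x₁ hx₁ x₂ hx₂ hle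
  have hcomp : ∀ x ∈ Icc xstar b, HasDerivWithinAt
      (fun x => (x - xstar) ^ (2 * n + 1) / (4 * (2 * (n : ℝ) + 1)))
      ((x - xstar) ^ (2 * n) / 4) (Icc xstar b) x := by
    intro x _
    refine ((((hasDerivWithinAt_id x _).sub_const xstar).pow (2 * n + 1)).div_const
      (4 * (2 * (n : ℝ) + 1))).congr_deriv ?_
    push_cast [id]
    field_simp
  have hdom : ∀ x ∈ Icc xstar b, (x - xstar) ^ (2 * n) / 4 ≤
      (2 * (n : ℝ) + 1) * a * (x - xstar) ^ (2 * n) + h x * (x - xstar) ^ (2 * n + 1) := by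
    intro x hx
    have hNa : 1 / 2 ≤ (2 * (n : ℝ) + 1) * a := by
      rw [div_le_iff₀ (by positivity)] at ha
      linarith
    have hmain := sub_mul_pow_le_mul_pow_add_mul_pow_succ (A := (2 * (n : ℝ) + 1) * a) (2 * n)
      (sub_nonneg.2 hx.1) (by linarith [hx.2]) (hhb x hx)
    nlinarith [pow_nonneg (sub_nonneg.2 hx.1) (2 * n)]
  calc (x₂ - x₁) ^ (2 * n + 1) / (4 * (2 * (n : ℝ) + 1))
      ≤ ((x₂ - xstar) ^ (2 * n + 1) - (x₁ - xstar) ^ (2 * n + 1)) / (4 * (2 * (n : ℝ) + 1)) := by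
        gcongr
        exact sub_pow_le_sub_pow_sub_sub_pow (Nat.succ_ne_zero _) hx₁.1 hle
    _ ≤ g x₂ - g x₁ := by
        rw [sub_div]
        exact sub_le_sub_of_hasDerivWithinAt_le (convex_Icc xstar b) hcomp hg hdom hx₁ hx₂ hle

theorem statement10 (n : ℕ) (hn : 1 ≤ n) (a xstar b : ℝ)
    (ha : 1 / (2 * (2 * (n : ℝ) + 1)) ≤ a)
    (hb0 : 0 < b - xstar) (hb1 : b - xstar ≤ 1)
    (h g : ℝ → ℝ)
    (hhcont : ContinuousOn h (Set.Icc xstar b))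
    (hhb : ∀ x ∈ Set.Icc xstar b, |h x| ≤ 1 / 4)
    (hg : ∀ x ∈ Set.Icc xstar b,
      HasDerivWithinAt g
        ((2 * (n : ℝ) + 1) * a * (x - xstar) ^ (2 * n) + h x * (x - xstar) ^ (2 * n + 1))
        (Set.Icc xstar b) x) :
    ∀ x₁ ∈ Set.Icc xstar b, ∀ x₂ ∈ Set.Icc xstar b, x₁ ≤ x₂ →
      (x₂ - x₁) ^ (2 * n + 1) / (4 * (2 * (n : ℝ) + 1)) ≤ g x₂ - g x₁ :=
  statement10_general n a xstar b ha hb1 h g hhb hg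
end

section
/- For all integers m ≥ 1 and ℓ ≥ 2, and every real p > 1: Σ_{(j₁,…,j_ℓ) ∈ ℕ^ℓ, j₁+⋯+j_ℓ = m} (m+1)^p / ((j₁+1)^p ⋯ (j_ℓ+1)^p) < ℓ^{1+p} · ( Σ_{j=1}^∞ 1/j^p )^{ℓ−1}. -/
open Finset

theorem statement15 (m ℓ : ℕ) (hm : 1 ≤ m) (hℓ : 2 ≤ ℓ) (p : ℝ) (hp : 1 < p) :
    ∑ j ∈ Finset.Nat.antidiagonalTuple ℓ m,
        ((m : ℝ) + 1) ^ p / ∏ i, ((j i : ℝ) + 1) ^ p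
      < (ℓ : ℝ) ^ (1 + p) * (∑' k : ℕ, 1 / ((k : ℝ) + 1) ^ p) ^ (ℓ - 1) := by
  have hp0 : (0:ℝ) < p := by linarith
  have hℓR : (0:ℝ) < (ℓ:ℝ) := by exact_mod_cast (by omega : 0 < ℓ)
  have hne : Nonempty (Fin ℓ) := ⟨⟨0, by omega⟩⟩
  have hsum : Summable (fun n : ℕ => 1 / ((n:ℝ) + 1) ^ p) := by
    have h1 : Summable (fun n : ℕ => 1 / (n : ℝ) ^ p) :=
      (Real.summable_one_div_nat_rpow).2 hp
    have h2 := (summable_nat_add_iff 1).2 h1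
    refine h2.congr fun n => ?_
    push_cast
    ring_nf
  -- The partial sum T
  have hTS : (∑ n ∈ Finset.range (m+1), 1 / ((n:ℝ) + 1) ^ p)
      < ∑' k : ℕ, 1 / ((k : ℝ) + 1) ^ p := by
    have h1 : (∑ n ∈ Finset.range (m+1), 1 / ((n:ℝ) + 1) ^ p)
        < ∑ n ∈ Finset.range (m+2), 1 / ((n:ℝ) + 1) ^ p := by
      conv_rhs => rw [Finset.sum_range_succ]
      have : (0:ℝ) < 1 / (((m+1 : ℕ):ℝ) + 1) ^ p := by positivity
      linarith
    have h2 := Summable.sum_le_tsum (Finset.range (m+2))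
      (fun i _ => by positivity) hsum
    linarith
  have hT0 : (0:ℝ) ≤ ∑ n ∈ Finset.range (m+1), 1 / ((n:ℝ) + 1) ^ p :=
    Finset.sum_nonneg fun n _ => by positivity
  -- key pointwise bound
  have key1 : ∀ j ∈ Finset.Nat.antidiagonalTuple ℓ m,
      ((m : ℝ) + 1) ^ p / ∏ i, ((j i : ℝ) + 1) ^ p ≤
        (ℓ:ℝ)^p * ∑ i : Fin ℓ, ∏ k ∈ univ.erase i, (1 / ((j k : ℝ) + 1) ^ p) := by
    intro j hj
    rw [Finset.Nat.mem_antidiagonalTuple] at hj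
    obtain ⟨i, hi⟩ := Finite.exists_max j
    have hmi : (m:ℝ) + 1 ≤ (ℓ:ℝ) * ((j i : ℝ) + 1) := by
      have hnat : m + 1 ≤ ℓ * (j i + 1) := by
        calc m + 1 ≤ m + ℓ := by omega
        _ = ∑ k : Fin ℓ, (j k + 1) := by
            rw [Finset.sum_add_distrib, hj]; simp
        _ ≤ ∑ _k : Fin ℓ, (j i + 1) :=
            Finset.sum_le_sum fun k _ => Nat.add_le_add_right (hi k) 1
        _ = ℓ * (j i + 1) := by simp [Finset.sum_const, mul_comm]
      exact_mod_cast hnat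
    have h1 : ((m:ℝ)+1)^p ≤ (ℓ:ℝ)^p * ((j i:ℝ)+1)^p := by
      rw [← Real.mul_rpow (by positivity) (by positivity)]
      exact Real.rpow_le_rpow (by positivity) hmi hp0.le
    have hPpos : (0:ℝ) < ∏ k ∈ univ.erase i, ((j k:ℝ)+1)^p :=
      Finset.prod_pos fun k _ => by positivity
    have hprod : (∏ k, ((j k:ℝ)+1)^p)
        = ((j i:ℝ)+1)^p * ∏ k ∈ univ.erase i, ((j k:ℝ)+1)^p :=
      (Finset.mul_prod_erase univ _ (mem_univ i)).symm
    have step : ((m : ℝ) + 1) ^ p / ∏ k, ((j k : ℝ) + 1) ^ p ≤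
        (ℓ:ℝ)^p * ∏ k ∈ univ.erase i, (1 / ((j k : ℝ) + 1) ^ p) := by
      have hinv : ∏ k ∈ univ.erase i, (1 / ((j k : ℝ) + 1) ^ p)
          = 1 / ∏ k ∈ univ.erase i, ((j k:ℝ)+1)^p := by
        rw [one_div, ← Finset.prod_inv_distrib]
        simp [one_div]
      rw [hprod, hinv, div_le_iff₀ (by positivity)]
      calc ((m:ℝ)+1)^p ≤ (ℓ:ℝ)^p * ((j i:ℝ)+1)^p := h1
        _ = (ℓ:ℝ)^p * (1 / ∏ k ∈ univ.erase i, ((j k:ℝ)+1)^p)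
              * (((j i:ℝ)+1)^p * ∏ k ∈ univ.erase i, ((j k:ℝ)+1)^p) := by
            field_simp
    refine step.trans ?_
    have : (∏ k ∈ univ.erase i, (1 / ((j k : ℝ) + 1) ^ p))
        ≤ ∑ i' : Fin ℓ, ∏ k ∈ univ.erase i', (1 / ((j k : ℝ) + 1) ^ p) :=
      Finset.single_le_sum (f := fun i' => ∏ k ∈ univ.erase i', (1 / ((j k : ℝ) + 1) ^ p))
        (fun i' _ => Finset.prod_nonneg fun k _ => by positivity) (mem_univ i)
    exact mul_le_mul_of_nonneg_left this (by positivity)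
  -- per-i bound
  have per_i : ∀ i : Fin ℓ,
      (∑ j ∈ Finset.Nat.antidiagonalTuple ℓ m,
          ∏ k ∈ univ.erase i, (1 / ((j k : ℝ) + 1) ^ p))
        ≤ (∑ n ∈ Finset.range (m+1), 1/((n:ℝ)+1)^p) ^ (ℓ-1) := by
    intro i
    classical
    have hcard : (univ.erase i).card = ℓ - 1 := by simp
    have hps := Finset.prod_sum (univ.erase i) (fun _ => Finset.range (m+1))
      (fun (_ : Fin ℓ) (n : ℕ) => 1/((n:ℝ)+1)^p)
    rw [Finset.prod_const, hcard] at hps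
    set r : (Fin ℓ → ℕ) → (∀ a ∈ univ.erase i, ℕ) := fun j k _ => j k with hr
    have hinj : ∀ x ∈ Finset.Nat.antidiagonalTuple ℓ m,
        ∀ y ∈ Finset.Nat.antidiagonalTuple ℓ m, r x = r y → x = y := by
      intro x hx y hy hxy
      rw [Finset.Nat.mem_antidiagonalTuple] at hx hy
      have hagree : ∀ k ∈ univ.erase i, x k = y k := fun k hk =>
        congrFun (congrFun hxy k) hk
      have hsx : ∑ k, x k = x i + ∑ k ∈ univ.erase i, x k :=
        (Finset.add_sum_erase univ x (mem_univ i)).symm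
      have hsy : ∑ k, y k = y i + ∑ k ∈ univ.erase i, y k :=
        (Finset.add_sum_erase univ y (mem_univ i)).symm
      have hxi : x i = y i := by
        have : ∑ k ∈ univ.erase i, x k = ∑ k ∈ univ.erase i, y k :=
          Finset.sum_congr rfl hagree
        omega
      funext k
      by_cases hk : k = i
      · rw [hk, hxi]
      · exact hagree k (Finset.mem_erase.2 ⟨hk, mem_univ k⟩)
    have heq : (∑ j ∈ Finset.Nat.antidiagonalTuple ℓ m,
          ∏ k ∈ univ.erase i, (1 / ((j k : ℝ) + 1) ^ p))
        = ∑ g ∈ (Finset.Nat.antidiagonalTuple ℓ m).image r,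
            ∏ x ∈ (univ.erase i).attach, 1 / ((g x.1 x.2 : ℝ) + 1) ^ p := by
      rw [Finset.sum_image hinj]
      refine Finset.sum_congr rfl fun j hj => ?_
      rw [← Finset.prod_attach (univ.erase i) (fun k => 1 / ((j k : ℝ) + 1) ^ p)]
    have hle : (∑ g ∈ (Finset.Nat.antidiagonalTuple ℓ m).image r,
            ∏ x ∈ (univ.erase i).attach, 1 / ((g x.1 x.2 : ℝ) + 1) ^ p)
        ≤ ∑ g ∈ (univ.erase i).pi (fun _ => Finset.range (m+1)),
            ∏ x ∈ (univ.erase i).attach, 1 / ((g x.1 x.2 : ℝ) + 1) ^ p := by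
      refine Finset.sum_le_sum_of_subset_of_nonneg ?_ ?_
      · intro g hg
        rw [Finset.mem_image] at hg
        obtain ⟨j, hj, rfl⟩ := hg
        rw [Finset.Nat.mem_antidiagonalTuple] at hj
        rw [Finset.mem_pi]
        intro a ha
        rw [Finset.mem_range]
        show j a < m + 1
        have h1 : j a ≤ ∑ k, j k :=
          Finset.single_le_sum (fun k _ => Nat.zero_le _) (mem_univ a)
        omega
      · intro g _ _
        exact Finset.prod_nonneg fun x _ => by positivity
    have hfin : (∑ g ∈ (univ.erase i).pi (fun _ => Finset.range (m+1)),
            ∏ x ∈ (univ.erase i).attach, 1 / ((g x.1 x.2 : ℝ) + 1) ^ p)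
        = (∑ n ∈ Finset.range (m+1), 1/((n:ℝ)+1)^p) ^ (ℓ-1) := hps.symm
    rw [heq, ← hfin]
    exact hle
  -- combine
  calc ∑ j ∈ Finset.Nat.antidiagonalTuple ℓ m,
        ((m : ℝ) + 1) ^ p / ∏ i, ((j i : ℝ) + 1) ^ p
      ≤ ∑ j ∈ Finset.Nat.antidiagonalTuple ℓ m,
          (ℓ:ℝ)^p * ∑ i : Fin ℓ, ∏ k ∈ univ.erase i, (1 / ((j k : ℝ) + 1) ^ p) :=
        Finset.sum_le_sum key1
    _ = (ℓ:ℝ)^p * ∑ i : Fin ℓ, ∑ j ∈ Finset.Nat.antidiagonalTuple ℓ m,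
          ∏ k ∈ univ.erase i, (1 / ((j k : ℝ) + 1) ^ p) := by
        rw [← Finset.mul_sum, Finset.sum_comm]
    _ ≤ (ℓ:ℝ)^p * ∑ _i : Fin ℓ, (∑ n ∈ Finset.range (m+1), 1/((n:ℝ)+1)^p) ^ (ℓ-1) := by
        refine mul_le_mul_of_nonneg_left (Finset.sum_le_sum fun i _ => per_i i) ?_
        positivity
    _ = (ℓ:ℝ)^p * ((ℓ:ℝ) * (∑ n ∈ Finset.range (m+1), 1/((n:ℝ)+1)^p) ^ (ℓ-1)) := by
        simp [Finset.sum_const, Finset.card_univ, mul_comm]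
    _ < (ℓ:ℝ)^p * ((ℓ:ℝ) * (∑' k : ℕ, 1 / ((k : ℝ) + 1) ^ p) ^ (ℓ-1)) := by
        refine mul_lt_mul_of_pos_left (mul_lt_mul_of_pos_left ?_ hℓR) (by positivity)
        exact pow_lt_pow_left₀ hTS hT0 (by omega)
    _ = (ℓ : ℝ) ^ (1 + p) * (∑' k : ℕ, 1 / ((k : ℝ) + 1) ^ p) ^ (ℓ - 1) := by
        rw [Real.rpow_add hℓR, Real.rpow_one]
        ring
end

section
/- For every integer m ≥ 0: (i) Σ_{j=0}^m (m+1)² / ((j+1)²(m+1−j)²) < 4π²/3; and (ii) Σ_{(j₁,j₂,j₃) ∈ ℕ³, j₁+j₂+j₃ = m} (m+1)² / ((j₁+1)²(j₂+1)²(j₃+1)²) < 3π⁴/4. -/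
lemma sumsq_le' (n : ℕ) : ∑ j ∈ Finset.range (n+1), (1:ℝ)/((j:ℝ)+1)^2 ≤ 2 - 1/((n:ℝ)+1) := by
  induction n with
  | zero => norm_num
  | succ n ih =>
    rw [Finset.sum_range_succ]
    have e : (((n+1:ℕ)):ℝ) = (n:ℝ)+1 := by push_cast; ring
    rw [e]
    have h1 : (0:ℝ) < (n:ℝ)+1 := by positivity
    have key : (1:ℝ)/((n:ℝ)+1+1)^2 ≤ 1/((n:ℝ)+1) - 1/((n:ℝ)+1+1) := by
      rw [div_sub_div _ _ (ne_of_gt h1) (by positivity),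
        div_le_div_iff₀ (by positivity) (by positivity)]
      nlinarith
    linarith

lemma sumsq_le (n : ℕ) : ∑ j ∈ Finset.range n, (1:ℝ)/((j:ℝ)+1)^2 ≤ 2 := by
  cases n with
  | zero => simp
  | succ n =>
    have h : (0:ℝ) < 1/((n:ℝ)+1) := by positivity
    linarith [sumsq_le' n]

lemma pair_le (m : ℕ) (a b : Fin 3) (hab : a ≠ b) :
    ∑ j ∈ Finset.Nat.antidiagonalTuple 3 m,
      (1:ℝ)/(((j a : ℝ)+1)^2 * ((j b : ℝ)+1)^2) ≤ 4 := by
  set A := Finset.Nat.antidiagonalTuple 3 m with hA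
  have hinj : ∀ x ∈ A, ∀ y ∈ A,
      (fun j : Fin 3 → ℕ => (j a, j b)) x = (fun j => (j a, j b)) y → x = y := by
    intro x hx y hy hxy
    simp only [hA, Finset.Nat.mem_antidiagonalTuple, Fin.sum_univ_three] at hx hy
    rw [Prod.mk.injEq] at hxy
    obtain ⟨h1, h2⟩ := hxy
    funext i
    fin_cases a <;> fin_cases b <;> fin_cases i <;> simp_all <;> omega
  have himg : A.image (fun j : Fin 3 → ℕ => (j a, j b)) ⊆
      Finset.range (m+1) ×ˢ Finset.range (m+1) := by
    intro p hp
    simp only [Finset.mem_image] at hp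
    obtain ⟨j, hj, rfl⟩ := hp
    simp only [hA, Finset.Nat.mem_antidiagonalTuple] at hj
    have ha : j a ≤ m := hj ▸ Finset.single_le_sum (fun i _ => Nat.zero_le _) (Finset.mem_univ a)
    have hb : j b ≤ m := hj ▸ Finset.single_le_sum (fun i _ => Nat.zero_le _) (Finset.mem_univ b)
    simp [Finset.mem_product, Nat.lt_succ_iff, ha, hb]
  calc ∑ j ∈ A, (1:ℝ)/(((j a : ℝ)+1)^2 * ((j b : ℝ)+1)^2)
      = ∑ p ∈ A.image (fun j : Fin 3 → ℕ => (j a, j b)),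
          (1:ℝ)/(((p.1 : ℝ)+1)^2 * ((p.2 : ℝ)+1)^2) := by rw [Finset.sum_image hinj]
    _ ≤ ∑ p ∈ Finset.range (m+1) ×ˢ Finset.range (m+1),
          (1:ℝ)/(((p.1 : ℝ)+1)^2 * ((p.2 : ℝ)+1)^2) := by
        apply Finset.sum_le_sum_of_subset_of_nonneg himg
        intro p _ _; positivity
    _ = (∑ x ∈ Finset.range (m+1), (1:ℝ)/((x:ℝ)+1)^2) *
          (∑ y ∈ Finset.range (m+1), (1:ℝ)/((y:ℝ)+1)^2) := by
        rw [Finset.sum_mul_sum]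
        rw [Finset.sum_product]
        congr 1; funext x; congr 1; funext y
        rw [div_mul_div_comm, one_mul]
    _ ≤ 2 * 2 := by
        have h := sumsq_le (m+1)
        have hpos : (0:ℝ) ≤ ∑ x ∈ Finset.range (m+1), (1:ℝ)/((x:ℝ)+1)^2 := by positivity
        nlinarith
    _ = 4 := by norm_num

theorem statement16 (m : ℕ) :
    (∑ j ∈ Finset.range (m + 1),
        ((m : ℝ) + 1) ^ 2 / (((j : ℝ) + 1) ^ 2 * ((m : ℝ) + 1 - (j : ℝ)) ^ 2)
      < 4 * Real.pi ^ 2 / 3) ∧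
    (∑ j ∈ Finset.Nat.antidiagonalTuple 3 m,
        ((m : ℝ) + 1) ^ 2 /
          (((j 0 : ℝ) + 1) ^ 2 * ((j 1 : ℝ) + 1) ^ 2 * ((j 2 : ℝ) + 1) ^ 2)
      < 3 * Real.pi ^ 4 / 4) := by
  have hπ := Real.pi_gt_three
  constructor
  · -- part (i)
    have hbound : ∑ j ∈ Finset.range (m + 1),
        ((m : ℝ) + 1) ^ 2 / (((j : ℝ) + 1) ^ 2 * ((m : ℝ) + 1 - (j : ℝ)) ^ 2) ≤ 8 := by
      have hpt : ∀ j ∈ Finset.range (m+1),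
          ((m : ℝ) + 1) ^ 2 / (((j : ℝ) + 1) ^ 2 * ((m : ℝ) + 1 - (j : ℝ)) ^ 2)
            ≤ 2 * ((1:ℝ)/((j:ℝ)+1)^2) + 2 * ((1:ℝ)/(((m-j:ℕ):ℝ)+1)^2) := by
        intro j hj
        rw [Finset.mem_range, Nat.lt_succ_iff] at hj
        have hb : ((m:ℝ)+1-(j:ℝ)) = ((m-j:ℕ):ℝ)+1 := by
          rw [Nat.cast_sub hj]; ring
        rw [hb]
        set a : ℝ := (j:ℝ)+1 with ha
        set b : ℝ := ((m-j:ℕ):ℝ)+1 with hbdef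
        have ha1 : (1:ℝ) ≤ a := by simp [ha]
        have hb1 : (1:ℝ) ≤ b := by simp [hbdef]
        have hab : a + b = (m:ℝ) + 2 := by
          rw [ha, hbdef, Nat.cast_sub hj]; ring
        have key : ((m:ℝ)+1)^2 ≤ 2*b^2 + 2*a^2 := by nlinarith [sq_nonneg (a-b)]
        have e : 2 * ((1:ℝ)/a^2) + 2 * ((1:ℝ)/b^2) = (2*b^2 + 2*a^2)/(a^2*b^2) := by
          field_simp <;> ring
        rw [e]
        gcongr
      calc ∑ j ∈ Finset.range (m + 1),
            ((m : ℝ) + 1) ^ 2 / (((j : ℝ) + 1) ^ 2 * ((m : ℝ) + 1 - (j : ℝ)) ^ 2)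
          ≤ ∑ j ∈ Finset.range (m+1),
            (2 * ((1:ℝ)/((j:ℝ)+1)^2) + 2 * ((1:ℝ)/(((m-j:ℕ):ℝ)+1)^2)) :=
            Finset.sum_le_sum hpt
        _ = 2 * (∑ j ∈ Finset.range (m+1), (1:ℝ)/((j:ℝ)+1)^2)
            + 2 * (∑ j ∈ Finset.range (m+1), (1:ℝ)/(((m-j:ℕ):ℝ)+1)^2) := by
            rw [Finset.sum_add_distrib, Finset.mul_sum, Finset.mul_sum]
        _ = 2 * (∑ j ∈ Finset.range (m+1), (1:ℝ)/((j:ℝ)+1)^2)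
            + 2 * (∑ j ∈ Finset.range (m+1), (1:ℝ)/((j:ℝ)+1)^2) := by
            congr 1
            congr 1
            exact Finset.sum_range_reflect (fun k => (1:ℝ)/((k:ℝ)+1)^2) (m+1)
        _ ≤ 2 * 2 + 2 * 2 := by
            have := sumsq_le (m+1)
            nlinarith
        _ = 8 := by norm_num
    nlinarith
  · -- part (ii)
    have hbound : ∑ j ∈ Finset.Nat.antidiagonalTuple 3 m,
        ((m : ℝ) + 1) ^ 2 /
          (((j 0 : ℝ) + 1) ^ 2 * ((j 1 : ℝ) + 1) ^ 2 * ((j 2 : ℝ) + 1) ^ 2) ≤ 36 := by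
      have hpt : ∀ j ∈ Finset.Nat.antidiagonalTuple 3 m,
          ((m : ℝ) + 1) ^ 2 /
            (((j 0 : ℝ) + 1) ^ 2 * ((j 1 : ℝ) + 1) ^ 2 * ((j 2 : ℝ) + 1) ^ 2)
          ≤ 3 * ((1:ℝ)/(((j 1:ℝ)+1)^2 * ((j 2:ℝ)+1)^2))
            + 3 * ((1:ℝ)/(((j 0:ℝ)+1)^2 * ((j 2:ℝ)+1)^2))
            + 3 * ((1:ℝ)/(((j 0:ℝ)+1)^2 * ((j 1:ℝ)+1)^2)) := by
        intro j hj
        rw [Finset.Nat.mem_antidiagonalTuple, Fin.sum_univ_three] at hj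
        have hsum : (j 0 : ℝ) + (j 1 : ℝ) + (j 2 : ℝ) = (m : ℝ) := by exact_mod_cast hj
        set a : ℝ := (j 0:ℝ)+1 with ha
        set b : ℝ := (j 1:ℝ)+1 with hb
        set c : ℝ := (j 2:ℝ)+1 with hc
        have ha1 : (1:ℝ) ≤ a := by simp [ha]
        have hb1 : (1:ℝ) ≤ b := by simp [hb]
        have hc1 : (1:ℝ) ≤ c := by simp [hc]
        have habc : a + b + c = (m:ℝ) + 3 := by rw [ha, hb, hc]; linarith
        have key : ((m:ℝ)+1)^2 ≤ 3*(a^2+b^2+c^2) := by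
          nlinarith [sq_nonneg (a-b), sq_nonneg (b-c), sq_nonneg (a-c)]
        have e : 3 * ((1:ℝ)/(b^2*c^2)) + 3 * ((1:ℝ)/(a^2*c^2)) + 3 * ((1:ℝ)/(a^2*b^2))
            = 3*(a^2+b^2+c^2)/(a^2*b^2*c^2) := by
          field_simp <;> ring
        rw [e]
        gcongr
      have h12 := pair_le m 1 2 (by decide)
      have h02 := pair_le m 0 2 (by decide)
      have h01 := pair_le m 0 1 (by decide)
      calc ∑ j ∈ Finset.Nat.antidiagonalTuple 3 m,
            ((m : ℝ) + 1) ^ 2 /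
              (((j 0 : ℝ) + 1) ^ 2 * ((j 1 : ℝ) + 1) ^ 2 * ((j 2 : ℝ) + 1) ^ 2)
          ≤ ∑ j ∈ Finset.Nat.antidiagonalTuple 3 m,
            (3 * ((1:ℝ)/(((j 1:ℝ)+1)^2 * ((j 2:ℝ)+1)^2))
            + 3 * ((1:ℝ)/(((j 0:ℝ)+1)^2 * ((j 2:ℝ)+1)^2))
            + 3 * ((1:ℝ)/(((j 0:ℝ)+1)^2 * ((j 1:ℝ)+1)^2))) := Finset.sum_le_sum hpt
        _ = 3 * (∑ j ∈ Finset.Nat.antidiagonalTuple 3 m,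
              (1:ℝ)/(((j 1:ℝ)+1)^2 * ((j 2:ℝ)+1)^2))
            + 3 * (∑ j ∈ Finset.Nat.antidiagonalTuple 3 m,
              (1:ℝ)/(((j 0:ℝ)+1)^2 * ((j 2:ℝ)+1)^2))
            + 3 * (∑ j ∈ Finset.Nat.antidiagonalTuple 3 m,
              (1:ℝ)/(((j 0:ℝ)+1)^2 * ((j 1:ℝ)+1)^2)) := by
            rw [Finset.sum_add_distrib, Finset.sum_add_distrib,
              Finset.mul_sum, Finset.mul_sum, Finset.mul_sum]
        _ ≤ 3 * 4 + 3 * 4 + 3 * 4 := by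
            gcongr <;> norm_num
        _ = 36 := by norm_num
    have h2 : (9:ℝ) < Real.pi^2 := by nlinarith
    have h4 : (81:ℝ) < Real.pi^4 := by nlinarith
    linarith
end

section
/- For every integer m ≥ 1: Σ_{j=1}^m (m+1)²(m+1−j) / (j³(m+2−j)²) ≤ 11m. -/
lemma sq_inv_sum (m : ℕ) (hm : 1 ≤ m) :
    ∑ j ∈ Finset.Icc 1 m, (1 : ℝ) / (j : ℝ) ^ 2 ≤ 2 - 1 / (m : ℝ) := by
  induction m with
  | zero => omega
  | succ n ih =>
    rcases Nat.eq_or_lt_of_le hm with h | h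
    · simp [← h]
      norm_num
    · have hn : 1 ≤ n := by omega
      have hsum := ih hn
      rw [Finset.sum_Icc_succ_top (by omega : 1 ≤ n + 1)]
      have hn0 : (0 : ℝ) < n := by exact_mod_cast hn
      have h1 : (1 : ℝ) / ((n : ℝ) + 1) ^ 2 ≤ 1 / n - 1 / (n + 1) := by
        rw [div_sub_div _ _ (ne_of_gt hn0) (by positivity)]
        rw [div_le_div_iff₀ (by positivity) (by positivity)]
        ring_nf
        nlinarith
      push_cast
      linarith

lemma key (M x : ℝ) (hx : 1 ≤ x) (hxM : x ≤ M) :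
    (M + 1) ^ 2 * (M + 1 - x) / (x ^ 3 * (M + 2 - x) ^ 2) ≤ (2 * M + 1) / x ^ 2 + 1 := by
  have hx0 : 0 < x := by linarith
  have hk : 2 ≤ M + 2 - x := by linarith
  have hk0 : 0 < M + 2 - x := by linarith
  have e : (2 * M + 1) / x ^ 2 + 1 = ((2 * M + 1) * x + x ^ 3) / x ^ 3 := by
    field_simp
  rw [e, div_le_div_iff₀ (by positivity) (by positivity)]
  have h1 : (M + 1) ^ 2 * (M + 1 - x) ≤ ((2 * M + 1) * x + x ^ 3) * (M + 2 - x) ^ 2 := by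
    nlinarith [sq_nonneg (x - (M + 1 - x)), sq_nonneg (M + 1 - x), sq_nonneg x,
      mul_nonneg (sub_nonneg.2 hk) (sq_nonneg (M + 1 - x)),
      mul_nonneg (mul_nonneg (sub_nonneg.2 hk) hk0.le) hk0.le,
      mul_nonneg (sub_nonneg.2 hx) (sq_nonneg (M + 2 - x))]
  calc (M + 1) ^ 2 * (M + 1 - x) * x ^ 3
      ≤ (((2 * M + 1) * x + x ^ 3) * (M + 2 - x) ^ 2) * x ^ 3 := by
        nlinarith [pow_pos hx0 3]
    _ = ((2 * M + 1) * x + x ^ 3) * (x ^ 3 * (M + 2 - x) ^ 2) := by ring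

theorem statement17 (m : ℕ) (hm : 1 ≤ m) :
    ∑ j ∈ Finset.Icc 1 m,
        ((m : ℝ) + 1) ^ 2 * ((m : ℝ) + 1 - (j : ℝ)) /
          ((j : ℝ) ^ 3 * ((m : ℝ) + 2 - (j : ℝ)) ^ 2)
      ≤ 11 * (m : ℝ) := by
  have hm0 : (1 : ℝ) ≤ (m : ℝ) := by exact_mod_cast hm
  have step1 : ∑ j ∈ Finset.Icc 1 m,
        ((m : ℝ) + 1) ^ 2 * ((m : ℝ) + 1 - (j : ℝ)) /
          ((j : ℝ) ^ 3 * ((m : ℝ) + 2 - (j : ℝ)) ^ 2)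
      ≤ ∑ j ∈ Finset.Icc 1 m, ((2 * (m : ℝ) + 1) / (j : ℝ) ^ 2 + 1) := by
    apply Finset.sum_le_sum
    intro j hj
    rw [Finset.mem_Icc] at hj
    exact key (m : ℝ) (j : ℝ) (by exact_mod_cast hj.1) (by exact_mod_cast hj.2)
  have step2 : ∑ j ∈ Finset.Icc 1 m, ((2 * (m : ℝ) + 1) / (j : ℝ) ^ 2 + 1)
      = (2 * (m : ℝ) + 1) * ∑ j ∈ Finset.Icc 1 m, (1 : ℝ) / (j : ℝ) ^ 2 + m := by
    rw [Finset.sum_add_distrib, Finset.mul_sum]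
    simp [Nat.card_Icc, mul_one_div, div_eq_mul_inv]
  have hsq := sq_inv_sum m hm
  have hsq2 : ∑ j ∈ Finset.Icc 1 m, (1 : ℝ) / (j : ℝ) ^ 2 ≤ 2 := by
    have : (0 : ℝ) < 1 / (m : ℝ) := by positivity
    linarith
  calc _ ≤ (2 * (m : ℝ) + 1) * ∑ j ∈ Finset.Icc 1 m, (1 : ℝ) / (j : ℝ) ^ 2 + m := by
        rw [← step2]; exact step1
    _ ≤ (2 * (m : ℝ) + 1) * 2 + m := by
        have : (0 : ℝ) ≤ 2 * (m : ℝ) + 1 := by linarith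
        nlinarith
    _ ≤ 11 * (m : ℝ) := by linarith
end

section
/- For every integer m ≥ 1: (i) Σ_{j=0}^m (m+2) / ((j+1)²(m+2−j)) < 2π²/3; (ii) Σ_{j=1}^m (m+2) / (j³(m+2−j)) < 8; and (iii) Σ_{j=2}^m (m+1) / (j³(m+2−j)) < 61/10. -/
/-! Each summand is bounded termwise by a combination of reciprocal squares, and every finite sum
of reciprocal squares of distinct positive integers is at most `ζ(2) = π²/6`. For (i) the bound is
`(x + d - 1)/(x²d) ≤ 3/(2x²) + 1/(2d²)` with `x = j + 1`, `d = m + 2 - j`; as `j` runs over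
`0, …, m` both `x` and `d` run over distinct positive integers, so the sum is at most
`π²/4 + π²/12 = π²/3`. For (ii) and (iii) the numerator is at most `x + d ≤ 3xd/2` (as `x ≥ 1`,
`d ≥ 2`), so each sum is at most `(3/2) ζ(2) = π²/4 < 61/10`. -/

open Finset Real

lemma sum_one_div_sq_le_pi_sq_div_six (s : Finset ℕ) : ∑ j ∈ s, 1 / (j : ℝ) ^ 2 ≤ π ^ 2 / 6 :=
  sum_le_hasSum s (fun _ _ => by positivity) hasSum_zeta_two

lemma sum_range_one_div_add_one_sq_le (n : ℕ) :
    ∑ j ∈ range n, 1 / ((j : ℝ) + 1) ^ 2 ≤ π ^ 2 / 6 := by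
  have hshift := sum_range_succ' (fun j : ℕ => 1 / (j : ℝ) ^ 2) n
  push_cast at hshift
  -- the `j = 0` term is the junk value `1 / 0 ^ 2 = 0`
  simp only [ne_eq, OfNat.ofNat_ne_zero, not_false_eq_true, zero_pow, div_zero, add_zero] at hshift
  rw [← hshift]
  exact sum_one_div_sq_le_pi_sq_div_six _

lemma sum_range_one_div_reflect_sq_le (m : ℕ) :
    ∑ j ∈ range (m + 1), 1 / ((m : ℝ) + 2 - j) ^ 2 ≤ π ^ 2 / 6 := by
  rw [← sum_range_reflect]
  calc ∑ j ∈ range (m + 1), 1 / ((m : ℝ) + 2 - ((m + 1 - 1 - j : ℕ) : ℝ)) ^ 2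
      = ∑ j ∈ range (m + 1), 1 / ((j : ℝ) + 2) ^ 2 := by
        refine sum_congr rfl fun j hj => ?_
        rw [Nat.add_sub_cancel, Nat.cast_sub (by simpa [Nat.lt_succ_iff] using hj)]
        ring_nf
    _ ≤ ∑ j ∈ range (m + 1), 1 / ((j : ℝ) + 1) ^ 2 :=
        sum_le_sum fun j _ => by gcongr; linarith
    _ ≤ π ^ 2 / 6 := sum_range_one_div_add_one_sq_le _

lemma add_sub_one_div_sq_mul_le {x d : ℝ} (hx : 0 < x) (hd : 0 < d) :
    (x + d - 1) / (x ^ 2 * d) ≤ 3 / 2 * (1 / x ^ 2) + 1 / 2 * (1 / d ^ 2) := by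
  have hrhs : 3 / 2 * (1 / x ^ 2) + 1 / 2 * (1 / d ^ 2) = (3 * d ^ 2 + x ^ 2) / (2 * x ^ 2 * d ^ 2) := by
    field_simp
  rw [hrhs, div_le_div_iff₀ (by positivity) (by positivity)]
  -- after cancelling `x²d`, the difference of the two sides is `(d - x)² + 2d`
  nlinarith [mul_nonneg (mul_nonneg (sq_nonneg x) hd.le) (add_nonneg (sq_nonneg (d - x)) hd.le)]

lemma div_cube_mul_le {c x d : ℝ} (hx : 1 ≤ x) (hd : 2 ≤ d) (hc : c ≤ x + d) :
    c / (x ^ 3 * d) ≤ 3 / 2 * (1 / x ^ 2) := by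
  have hx0 : 0 < x := by linarith
  rw [div_le_iff₀ (by positivity)]
  have hrhs : 3 / 2 * (1 / x ^ 2) * (x ^ 3 * d) = 3 / 2 * x * d := by field_simp
  rw [hrhs]
  nlinarith [mul_nonneg (sub_nonneg.2 hx) (sub_nonneg.2 hd)]

lemma sum_div_cube_mul_le {m : ℕ} {c : ℝ} (hc : c ≤ m + 2) {s : Finset ℕ}
    (hs : ∀ j ∈ s, 1 ≤ j ∧ j ≤ m) :
    ∑ j ∈ s, c / ((j : ℝ) ^ 3 * ((m : ℝ) + 2 - j)) ≤ π ^ 2 / 4 :=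
  calc ∑ j ∈ s, c / ((j : ℝ) ^ 3 * ((m : ℝ) + 2 - j))
      ≤ ∑ j ∈ s, 3 / 2 * (1 / (j : ℝ) ^ 2) := sum_le_sum fun j hj => by
        obtain ⟨hj₁, hjm⟩ := hs j hj
        have hj₁' : (1 : ℝ) ≤ j := by exact_mod_cast hj₁
        have hjm' : (j : ℝ) ≤ m := by exact_mod_cast hjm
        exact div_cube_mul_le hj₁' (by linarith) (by linarith)
    _ = 3 / 2 * ∑ j ∈ s, 1 / (j : ℝ) ^ 2 := by rw [mul_sum]
    _ ≤ 3 / 2 * (π ^ 2 / 6) := by gcongr; exact sum_one_div_sq_le_pi_sq_div_six s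
    _ = π ^ 2 / 4 := by ring

lemma sum_range_div_sq_mul_le (m : ℕ) :
    ∑ j ∈ range (m + 1), ((m : ℝ) + 2) / (((j : ℝ) + 1) ^ 2 * ((m : ℝ) + 2 - j)) ≤ π ^ 2 / 3 :=
  calc ∑ j ∈ range (m + 1), ((m : ℝ) + 2) / (((j : ℝ) + 1) ^ 2 * ((m : ℝ) + 2 - j))
      ≤ ∑ j ∈ range (m + 1), (3 / 2 * (1 / ((j : ℝ) + 1) ^ 2)
          + 1 / 2 * (1 / ((m : ℝ) + 2 - j) ^ 2)) := sum_le_sum fun j hj => by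
        have hjm : (j : ℝ) ≤ m := by exact_mod_cast Nat.lt_succ_iff.mp (mem_range.mp hj)
        have h := add_sub_one_div_sq_mul_le (x := (j : ℝ) + 1) (d := (m : ℝ) + 2 - j)
          (by positivity) (by linarith)
        rwa [show (j : ℝ) + 1 + ((m : ℝ) + 2 - j) - 1 = m + 2 by ring] at h
    _ = 3 / 2 * ∑ j ∈ range (m + 1), 1 / ((j : ℝ) + 1) ^ 2
          + 1 / 2 * ∑ j ∈ range (m + 1), 1 / ((m : ℝ) + 2 - j) ^ 2 := by
        rw [sum_add_distrib, mul_sum, mul_sum]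
    _ ≤ 3 / 2 * (π ^ 2 / 6) + 1 / 2 * (π ^ 2 / 6) := by
        gcongr
        · exact sum_range_one_div_add_one_sq_le _
        · exact sum_range_one_div_reflect_sq_le m
    _ = π ^ 2 / 3 := by ring

theorem statement18_general (m : ℕ) :
    (∑ j ∈ Finset.range (m + 1),
        ((m : ℝ) + 2) / (((j : ℝ) + 1) ^ 2 * ((m : ℝ) + 2 - (j : ℝ)))
      < 2 * Real.pi ^ 2 / 3) ∧
    (∑ j ∈ Finset.Icc 1 m,
        ((m : ℝ) + 2) / ((j : ℝ) ^ 3 * ((m : ℝ) + 2 - (j : ℝ))) < 8) ∧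
    (∑ j ∈ Finset.Icc 2 m,
        ((m : ℝ) + 1) / ((j : ℝ) ^ 3 * ((m : ℝ) + 2 - (j : ℝ))) < 61 / 10) := by
  have hpi : 0 < π := pi_pos
  have hpi_sq : π ^ 2 < 16 := by nlinarith [pi_lt_four]
  refine ⟨?_, ?_, ?_⟩
  · nlinarith [sum_range_div_sq_mul_le m]
  · have h := sum_div_cube_mul_le (c := (m : ℝ) + 2) le_rfl (s := Icc 1 m)
      fun j hj => mem_Icc.mp hj
    linarith
  · have h := sum_div_cube_mul_le (c := (m : ℝ) + 1) (by linarith) (s := Icc 2 m)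
      fun j hj => ⟨by have := (mem_Icc.mp hj).1; omega, (mem_Icc.mp hj).2⟩
    linarith

theorem statement18 (m : ℕ) (hm : 1 ≤ m) :
    (∑ j ∈ Finset.range (m + 1),
        ((m : ℝ) + 2) / (((j : ℝ) + 1) ^ 2 * ((m : ℝ) + 2 - (j : ℝ)))
      < 2 * Real.pi ^ 2 / 3) ∧
    (∑ j ∈ Finset.Icc 1 m,
        ((m : ℝ) + 2) / ((j : ℝ) ^ 3 * ((m : ℝ) + 2 - (j : ℝ))) < 8) ∧
    (∑ j ∈ Finset.Icc 2 m,
        ((m : ℝ) + 1) / ((j : ℝ) ^ 3 * ((m : ℝ) + 2 - (j : ℝ))) < 61 / 10) :=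
  statement18_general m
end

section
/- For every integer m ≥ 1: (i) Σ_{j=1}^m (m+1)² / (j³(m+1−j)²) < 25; (ii) Σ_{j=0}^{m−1} (m+1)² / ((j+1)²(m−j)²) < 16π²/3; and (iii) Σ_{(j₁,j₂,j₃) ∈ ℕ³, j₁+j₂+j₃ = m, j₁ ≥ 1} (m+1)² / (j₁³(j₂+1)²(j₃+1)²) < 163. -/
lemma st19_sum_inv_succ_sq_le' (n : ℕ) :
    ∑ b ∈ Finset.range n, (1:ℝ)/((b:ℝ)+1)^2 ≤ 2 - 2/((n:ℝ)+1) := by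
  induction n with
  | zero => norm_num
  | succ n ih =>
    rw [Finset.sum_range_succ]
    push_cast
    have h1 : (0:ℝ) < (n:ℝ)+1 := by positivity
    have h2 : (0:ℝ) < (n:ℝ)+1+1 := by positivity
    have key : (1:ℝ)/((n:ℝ)+1)^2 ≤ 2/((n:ℝ)+1) - 2/((n:ℝ)+1+1) := by
      rw [div_sub_div _ _ h1.ne' h2.ne', div_le_div_iff₀ (by positivity) (by positivity)]
      ring_nf
      nlinarith [sq_nonneg ((n:ℝ)+1)]
    linarith

lemma st19_sum_inv_succ_sq_le (n : ℕ) :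
    ∑ b ∈ Finset.range n, (1:ℝ)/((b:ℝ)+1)^2 ≤ 2 := by
  have h : (0:ℝ) ≤ 2/((n:ℝ)+1) := by positivity
  linarith [st19_sum_inv_succ_sq_le' n]

lemma st19_sum_inv_succ_pow_le (n k : ℕ) (hk : 2 ≤ k) :
    ∑ b ∈ Finset.range n, (1:ℝ)/((b:ℝ)+1)^k ≤ 2 := by
  have h1 : ∑ b ∈ Finset.range n, (1:ℝ)/((b:ℝ)+1)^k
      ≤ ∑ b ∈ Finset.range n, (1:ℝ)/((b:ℝ)+1)^2 := by
    apply Finset.sum_le_sum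
    intro b _
    have hb : (1:ℝ) ≤ (b:ℝ)+1 := le_add_of_nonneg_left (by positivity)
    exact one_div_le_one_div_of_le (by positivity) (pow_le_pow_right₀ hb hk)
  linarith [st19_sum_inv_succ_sq_le n]

lemma st19_sum_range_inv_pow_le (n k : ℕ) (hk : 2 ≤ k) :
    ∑ a ∈ Finset.range n, (1:ℝ)/((a:ℝ))^k ≤ 2 := by
  match n with
  | 0 => simp
  | n+1 =>
    rw [Finset.sum_range_succ']
    have h0 : (1:ℝ)/((0:ℕ):ℝ)^k = 0 := by
      rw [Nat.cast_zero, zero_pow (by omega), div_zero]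
    rw [h0, add_zero]
    have he : ∑ i ∈ Finset.range n, (1:ℝ)/(((i+1:ℕ)):ℝ)^k
        = ∑ i ∈ Finset.range n, (1:ℝ)/((i:ℝ)+1)^k := by
      apply Finset.sum_congr rfl; intro i _; push_cast; ring_nf
    rw [he]
    exact st19_sum_inv_succ_pow_le n k hk

lemma st19_sum_Icc_inv_pow_le (n k : ℕ) (hk : 2 ≤ k) :
    ∑ a ∈ Finset.Icc 1 n, (1:ℝ)/((a:ℝ))^k ≤ 2 := by
  have h1 : ∑ a ∈ Finset.Icc 1 n, (1:ℝ)/((a:ℝ))^k ≤ ∑ a ∈ Finset.Icc 1 n, (1:ℝ)/((a:ℝ))^2 := by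
    apply Finset.sum_le_sum
    intro a ha
    have ha1 : 1 ≤ a := (Finset.mem_Icc.mp ha).1
    have har : (1:ℝ) ≤ (a:ℝ) := by exact_mod_cast ha1
    apply one_div_le_one_div_of_le (by positivity)
    exact pow_le_pow_right₀ har hk
  have h2 : ∑ a ∈ Finset.Icc 1 n, (1:ℝ)/((a:ℝ))^2 = ∑ b ∈ Finset.range n, (1:ℝ)/((b:ℝ)+1)^2 := by
    have e1 : Finset.Icc 1 n = Finset.Ico 1 (n+1) := by rw [Finset.Ico_add_one_right_eq_Icc]
    rw [e1, Finset.sum_Ico_eq_sum_range]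
    apply Finset.sum_congr (by norm_num)
    intro i _
    push_cast
    ring_nf
  linarith [st19_sum_inv_succ_sq_le n, h1, h2.le]

lemma st19_reflect_range (m : ℕ) : ∑ j ∈ Finset.range m, (1:ℝ)/(((m:ℝ)-(j:ℝ))^2)
    = ∑ j ∈ Finset.range m, (1:ℝ)/(((j:ℝ)+1)^2) := by
  rw [← Finset.sum_range_reflect (fun j => (1:ℝ)/(((j:ℝ)+1)^2)) m]
  apply Finset.sum_congr rfl
  intro j hj
  have hj' : j < m := Finset.mem_range.mp hj
  have h1 : ((m-1-j:ℕ):ℝ) = (m:ℝ) - 1 - (j:ℝ) := by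
    rw [Nat.cast_sub (by omega), Nat.cast_sub (by omega)]
    norm_num
  simp only [h1]
  ring_nf

lemma st19_reflect_Icc (m : ℕ) : ∑ j ∈ Finset.Icc 1 m, (1:ℝ)/(((m:ℝ)+1-(j:ℝ))^2) ≤ 2 := by
  have e1 : Finset.Icc 1 m = Finset.Ico 1 (m+1) := by rw [Finset.Ico_add_one_right_eq_Icc]
  rw [e1, Finset.sum_Ico_eq_sum_range]
  simp only [add_tsub_cancel_right]
  have e2 : ∑ i ∈ Finset.range m, (1:ℝ)/(((m:ℝ)+1-((1+i:ℕ):ℝ))^2)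
      = ∑ i ∈ Finset.range m, (1:ℝ)/(((m:ℝ)-(i:ℝ))^2) := by
    apply Finset.sum_congr rfl
    intro i _
    push_cast
    ring_nf
  rw [e2, st19_reflect_range]
  exact st19_sum_inv_succ_sq_le m

set_option maxHeartbeats 1000000 in
theorem statement19 (m : ℕ) (hm : 1 ≤ m) :
    (∑ j ∈ Finset.Icc 1 m,
        ((m : ℝ) + 1) ^ 2 / ((j : ℝ) ^ 3 * ((m : ℝ) + 1 - (j : ℝ)) ^ 2) < 25) ∧
    (∑ j ∈ Finset.range m,
        ((m : ℝ) + 1) ^ 2 / (((j : ℝ) + 1) ^ 2 * ((m : ℝ) - (j : ℝ)) ^ 2)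
      < 16 * Real.pi ^ 2 / 3) ∧
    (∑ j ∈ (Finset.Nat.antidiagonalTuple 3 m).filter (fun j => 1 ≤ j 0),
        ((m : ℝ) + 1) ^ 2 /
          ((j 0 : ℝ) ^ 3 * ((j 1 : ℝ) + 1) ^ 2 * ((j 2 : ℝ) + 1) ^ 2) < 163) := by
  refine ⟨?_, ?_, ?_⟩
  · -- Part (i)
    have step : ∑ j ∈ Finset.Icc 1 m,
        ((m : ℝ) + 1) ^ 2 / ((j : ℝ) ^ 3 * ((m : ℝ) + 1 - (j : ℝ)) ^ 2)
        ≤ ∑ j ∈ Finset.Icc 1 m, (2*((1:ℝ)/(j:ℝ)^3) + 2*(1/(((m:ℝ)+1-(j:ℝ))^2))) := by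
      apply Finset.sum_le_sum
      intro j hj
      obtain ⟨hj1, hj2⟩ := Finset.mem_Icc.mp hj
      have hx : (1:ℝ) ≤ (j:ℝ) := by exact_mod_cast hj1
      have hjm : (j:ℝ) ≤ (m:ℝ) := by exact_mod_cast hj2
      set x : ℝ := (j:ℝ) with hxdef
      set y : ℝ := (m:ℝ)+1-x with hydef
      have hy : (1:ℝ) ≤ y := by rw [hydef]; linarith
      have hsum : (m:ℝ)+1 = x + y := by rw [hydef]; ring
      rw [hsum]
      have hx0 : (0:ℝ) < x := by linarith
      have hy0 : (0:ℝ) < y := by linarith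
      have hx3 : x^2 ≤ x^3 := by nlinarith
      have key : (x+y)^2 ≤ 2*x^3 + 2*y^2 := by nlinarith [sq_nonneg (x-y)]
      calc (x+y)^2/(x^3*y^2) ≤ (2*x^3+2*y^2)/(x^3*y^2) := by gcongr
        _ = 2*(1/x^3) + 2*(1/y^2) := by field_simp; ring
    have A := st19_sum_Icc_inv_pow_le m 3 (by norm_num)
    have B := st19_reflect_Icc m
    rw [Finset.sum_add_distrib, ← Finset.mul_sum, ← Finset.mul_sum] at step
    linarith
  · -- Part (ii)
    have step : ∑ j ∈ Finset.range m,
        ((m : ℝ) + 1) ^ 2 / (((j : ℝ) + 1) ^ 2 * ((m : ℝ) - (j : ℝ)) ^ 2)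
        ≤ ∑ j ∈ Finset.range m, (2*((1:ℝ)/(((j:ℝ)+1)^2)) + 2*(1/(((m:ℝ)-(j:ℝ))^2))) := by
      apply Finset.sum_le_sum
      intro j hj
      have hj' : j < m := Finset.mem_range.mp hj
      have hjm : (j:ℝ) + 1 ≤ (m:ℝ) := by exact_mod_cast Nat.succ_le_of_lt hj'
      set x : ℝ := (j:ℝ) + 1 with hxd
      set y : ℝ := (m:ℝ) - (j:ℝ) with hyd
      have hx : (1:ℝ) ≤ x := by rw [hxd]; exact le_add_of_nonneg_left (by positivity)
      have hy : (1:ℝ) ≤ y := by rw [hyd]; linarith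
      have hsum : (m:ℝ)+1 = x + y := by rw [hxd, hyd]; ring
      rw [hsum]
      have hx0 : (0:ℝ) < x := by linarith
      have hy0 : (0:ℝ) < y := by linarith
      have key : (x+y)^2 ≤ 2*x^2 + 2*y^2 := by nlinarith [sq_nonneg (x-y)]
      calc (x+y)^2/(x^2*y^2) ≤ (2*x^2+2*y^2)/(x^2*y^2) := by gcongr
        _ = 2*(1/x^2) + 2*(1/y^2) := by field_simp; ring
    rw [Finset.sum_add_distrib, ← Finset.mul_sum, ← Finset.mul_sum, st19_reflect_range] at step
    have A := st19_sum_inv_succ_sq_le m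
    have hπ := Real.pi_gt_three
    nlinarith
  · -- Part (iii)
    set S := (Finset.Nat.antidiagonalTuple 3 m).filter (fun j => 1 ≤ j 0) with hS
    have hmemS : ∀ j ∈ S, j 0 + j 1 + j 2 = m ∧ 1 ≤ j 0 := by
      intro j hj
      rw [hS, Finset.mem_filter, Finset.Nat.mem_antidiagonalTuple] at hj
      rw [Fin.sum_univ_three] at hj
      exact hj
    have pairbd : ∀ (k l : Fin 3) (F : ℕ → ℕ → ℝ), (∀ a b, 0 ≤ F a b) →
        (∀ x ∈ S, ∀ y ∈ S, x k = y k → x l = y l → x = y) →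
        ∑ j ∈ S, F (j k) (j l)
          ≤ ∑ a ∈ Finset.range (m+1), ∑ b ∈ Finset.range (m+1), F a b := by
      intro k l F hF hinj
      have h1 : ∑ j ∈ S, F (j k) (j l)
          = ∑ p ∈ S.image (fun j => (j k, j l)), F p.1 p.2 := by
        rw [Finset.sum_image]
        intro x hx y hy hxy
        rw [Prod.mk.injEq] at hxy
        exact hinj x hx y hy hxy.1 hxy.2
      rw [h1]
      have h2 : S.image (fun j => (j k, j l))
          ⊆ Finset.range (m+1) ×ˢ Finset.range (m+1) := by
        intro p hp
        obtain ⟨j, hj, rfl⟩ := Finset.mem_image.mp hp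
        have huniv : ∑ i, j i = m := by
          have := hj
          rw [hS, Finset.mem_filter, Finset.Nat.mem_antidiagonalTuple] at this
          exact this.1
        have hk' : j k ≤ m := by
          calc j k ≤ ∑ i, j i := Finset.single_le_sum (fun i _ => Nat.zero_le _) (Finset.mem_univ k)
            _ = m := huniv
        have hl' : j l ≤ m := by
          calc j l ≤ ∑ i, j i := Finset.single_le_sum (fun i _ => Nat.zero_le _) (Finset.mem_univ l)
            _ = m := huniv
        simp [Finset.mem_product, Finset.mem_range]
        omega
      calc ∑ p ∈ S.image (fun j => (j k, j l)), F p.1 p.2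
          ≤ ∑ p ∈ Finset.range (m+1) ×ˢ Finset.range (m+1), F p.1 p.2 :=
            Finset.sum_le_sum_of_subset_of_nonneg h2 (fun p _ _ => hF p.1 p.2)
        _ = _ := by rw [Finset.sum_product]
    have inj01 : ∀ x ∈ S, ∀ y ∈ S, x 0 = y 0 → x 1 = y 1 → x = y := by
      intro x hx y hy h0 h1
      obtain ⟨hxs, _⟩ := hmemS x hx
      obtain ⟨hys, _⟩ := hmemS y hy
      have h2 : x 2 = y 2 := by omega
      funext i; fin_cases i <;> assumption
    have inj02 : ∀ x ∈ S, ∀ y ∈ S, x 0 = y 0 → x 2 = y 2 → x = y := by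
      intro x hx y hy h0 h2
      obtain ⟨hxs, _⟩ := hmemS x hx
      obtain ⟨hys, _⟩ := hmemS y hy
      have h1 : x 1 = y 1 := by omega
      funext i; fin_cases i <;> assumption
    have inj12 : ∀ x ∈ S, ∀ y ∈ S, x 1 = y 1 → x 2 = y 2 → x = y := by
      intro x hx y hy h1 h2
      obtain ⟨hxs, _⟩ := hmemS x hx
      obtain ⟨hys, _⟩ := hmemS y hy
      have h0 : x 0 = y 0 := by omega
      funext i; fin_cases i <;> assumption
    set F1 : ℕ → ℕ → ℝ := fun a b => 3*((1/(a:ℝ)^3)*(1/((b:ℝ)+1)^2)) with hF1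
    set F3 : ℕ → ℕ → ℝ := fun a b => 3*((1/((a:ℝ)+1)^2)*(1/((b:ℝ)+1)^2)) with hF3
    have hF1pos : ∀ a b, 0 ≤ F1 a b := by intro a b; simp only [hF1]; positivity
    have hF3pos : ∀ a b, 0 ≤ F3 a b := by intro a b; simp only [hF3]; positivity
    have ptwise : ∀ j ∈ S,
        ((m : ℝ) + 1) ^ 2 /
            ((j 0 : ℝ) ^ 3 * ((j 1 : ℝ) + 1) ^ 2 * ((j 2 : ℝ) + 1) ^ 2)
          ≤ F1 (j 0) (j 1) + F1 (j 0) (j 2) + F3 (j 1) (j 2) := by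
      intro j hj
      obtain ⟨hsum, hj0⟩ := hmemS j hj
      set x : ℝ := (j 0 : ℝ) with hxd
      set y : ℝ := (j 1 : ℝ) + 1 with hyd
      set z : ℝ := (j 2 : ℝ) + 1 with hzd
      have hx : (1:ℝ) ≤ x := by rw [hxd]; exact_mod_cast hj0
      have hy : (1:ℝ) ≤ y := by rw [hyd]; exact le_add_of_nonneg_left (by positivity)
      have hz : (1:ℝ) ≤ z := by rw [hzd]; exact le_add_of_nonneg_left (by positivity)
      have hm1 : (m:ℝ) + 1 = x + y + z - 1 := by
        rw [hxd, hyd, hzd]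
        have : ((j 0 + j 1 + j 2 : ℕ):ℝ) = (m:ℝ) := by exact_mod_cast congrArg Nat.cast hsum
        push_cast at this
        linarith
      rw [hm1]
      simp only [hF1, hF3]
      have hx0 : (0:ℝ) < x := by linarith
      have hy0 : (0:ℝ) < y := by linarith
      have hz0 : (0:ℝ) < z := by linarith
      have hx3 : x^2 ≤ x^3 := by nlinarith
      have key : (x+y+z-1)^2 ≤ 3*x^3 + 3*y^2 + 3*z^2 := by
        nlinarith [sq_nonneg (x-y), sq_nonneg (y-z), sq_nonneg (x-z)]
      calc (x+y+z-1)^2/(x^3*y^2*z^2)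
          ≤ (3*x^3 + 3*y^2 + 3*z^2)/(x^3*y^2*z^2) := by gcongr
        _ = 3*((1/x^3)*(1/y^2)) + 3*((1/x^3)*(1/z^2)) + 3*((1/y^2)*(1/z^2)) := by
            field_simp; ring
    have hA : ∑ a ∈ Finset.range (m+1), (1:ℝ)/((a:ℝ))^3 ≤ 2 :=
      st19_sum_range_inv_pow_le (m+1) 3 (by norm_num)
    have hB : ∑ b ∈ Finset.range (m+1), (1:ℝ)/((b:ℝ)+1)^2 ≤ 2 :=
      st19_sum_inv_succ_sq_le (m+1)
    have hA0 : (0:ℝ) ≤ ∑ a ∈ Finset.range (m+1), (1:ℝ)/((a:ℝ))^3 :=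
      Finset.sum_nonneg (fun a _ => by positivity)
    have hB0 : (0:ℝ) ≤ ∑ b ∈ Finset.range (m+1), (1:ℝ)/((b:ℝ)+1)^2 :=
      Finset.sum_nonneg (fun b _ => by positivity)
    have hdouble1 : ∑ a ∈ Finset.range (m+1), ∑ b ∈ Finset.range (m+1), F1 a b ≤ 12 := by
      have e : ∑ a ∈ Finset.range (m+1), ∑ b ∈ Finset.range (m+1), F1 a b
          = 3 * ((∑ a ∈ Finset.range (m+1), (1:ℝ)/((a:ℝ))^3)
              * (∑ b ∈ Finset.range (m+1), (1:ℝ)/((b:ℝ)+1)^2)) := by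
        rw [Finset.sum_mul_sum, Finset.mul_sum]
        apply Finset.sum_congr rfl
        intro a _
        rw [Finset.mul_sum]
      rw [e]
      nlinarith [mul_le_mul hA hB hB0 (by norm_num : (0:ℝ) ≤ 2)]
    have hdouble3 : ∑ a ∈ Finset.range (m+1), ∑ b ∈ Finset.range (m+1), F3 a b ≤ 12 := by
      have e : ∑ a ∈ Finset.range (m+1), ∑ b ∈ Finset.range (m+1), F3 a b
          = 3 * ((∑ a ∈ Finset.range (m+1), (1:ℝ)/((a:ℝ)+1)^2)
              * (∑ b ∈ Finset.range (m+1), (1:ℝ)/((b:ℝ)+1)^2)) := by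
        rw [Finset.sum_mul_sum, Finset.mul_sum]
        apply Finset.sum_congr rfl
        intro a _
        rw [Finset.mul_sum]
      rw [e]
      nlinarith [mul_le_mul hB hB hB0 (by norm_num : (0:ℝ) ≤ 2)]
    have big : ∑ j ∈ S, ((m : ℝ) + 1) ^ 2 /
            ((j 0 : ℝ) ^ 3 * ((j 1 : ℝ) + 1) ^ 2 * ((j 2 : ℝ) + 1) ^ 2)
        ≤ 36 := by
      calc ∑ j ∈ S, ((m : ℝ) + 1) ^ 2 /
            ((j 0 : ℝ) ^ 3 * ((j 1 : ℝ) + 1) ^ 2 * ((j 2 : ℝ) + 1) ^ 2)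
          ≤ ∑ j ∈ S, (F1 (j 0) (j 1) + F1 (j 0) (j 2) + F3 (j 1) (j 2)) :=
            Finset.sum_le_sum ptwise
        _ = (∑ j ∈ S, F1 (j 0) (j 1)) + (∑ j ∈ S, F1 (j 0) (j 2))
            + (∑ j ∈ S, F3 (j 1) (j 2)) := by
            rw [Finset.sum_add_distrib, Finset.sum_add_distrib]
        _ ≤ 12 + 12 + 12 := by
            have b1 := le_trans (pairbd 0 1 F1 hF1pos inj01) hdouble1
            have b2 := le_trans (pairbd 0 2 F1 hF1pos inj02) hdouble1
            have b3 := le_trans (pairbd 1 2 F3 hF3pos inj12) hdouble3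
            linarith
        _ = 36 := by norm_num
    linarith
end
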